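/- arXiv:1601.07769 — 11 statements merged into one kernel-verified Lean document; each statement's English description precedes it below -/
import Mathlib

section
/- Let L_0 be a densely defined minimal linear operator in a Hilbert space H, and let L̂ = M_0* be the associated maximal operator. If L_S is a correct extension of L_0 with D(L_S) = D(L_S*), then L_S is a boundary correct extension, i.e., L_0 ⊂ L_S ⊂ L̂. -/
open scoped InnerProductSpace

/-- `Tinv` is a bounded, everywhere-defined inverse of the partially defined operator `T`. -/
def IsBoundedInverse {H : Type} [NormedAddCommGroup H] [InnerProductSpace ℂ H]
    (T : H →ₗ.[ℂ] H) (Tinv : H →L[ℂ] H) : Prop :=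
  (∀ f : H, ∃ hf : Tinv f ∈ T.domain, T ⟨Tinv f, hf⟩ = f) ∧
  ∀ u : T.domain, Tinv (T u) = (u : H)

/-- A correct operator: closed with a bounded everywhere-defined inverse. -/
def IsCorrect {H : Type} [NormedAddCommGroup H] [InnerProductSpace ℂ H]
    (T : H →ₗ.[ℂ] H) : Prop :=
  T.IsClosed ∧ ∃ Tinv : H →L[ℂ] H, IsBoundedInverse T Tinv

/-- A minimal operator: closed, the closure of its range is not all of `H`,
and it has a bounded inverse on its range. -/
def IsMinimalOp {H : Type} [NormedAddCommGroup H] [InnerProductSpace ℂ H]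
    (T : H →ₗ.[ℂ] H) : Prop :=
  T.IsClosed ∧ closure (Set.range fun u : T.domain => T u) ≠ Set.univ ∧
    ∃ C : ℝ, 0 < C ∧ ∀ u : T.domain, ‖(u : H)‖ ≤ C * ‖T u‖

/-- Assertion 2.1. If `L_S` is a correct extension of the densely defined
minimal operator `L_0` with `D(L_S) = D(L_S*)`, then `L_S` is a boundary correct extension:
`L_0 ⊂ L_S ⊂ L̂` where `L̂ = M_0*`. -/
theorem boundary_correct_of_correct_ext_domain_eq
    {H : Type} [NormedAddCommGroup H] [InnerProductSpace ℂ H] [CompleteSpace H]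
    (L0 M0 : H →ₗ.[ℂ] H)
    (hL0min : IsMinimalOp L0) (hM0min : IsMinimalOp M0)
    (hL0dense : Dense (L0.domain : Set H)) (hM0dense : Dense (M0.domain : Set H))
    (hdom : M0.domain = L0.domain)
    (hform : ∀ (u : L0.domain) (v : M0.domain), ⟪L0 u, (v : H)⟫_ℂ = ⟪(u : H), M0 v⟫_ℂ)
    (LS : H →ₗ.[ℂ] H) (hLSext : L0 ≤ LS) (hLScorr : IsCorrect LS)
    (hLSdomeq : LS.adjoint.domain = LS.domain) :
    L0 ≤ LS ∧ LS ≤ M0.adjoint := by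
  refine ⟨hLSext, ?_⟩
  have hLSdense : Dense (LS.domain : Set H) :=
    hL0dense.mono (by exact_mod_cast hLSext.1)
  -- M0 is a formal adjoint of L0
  have hM0le : M0 ≤ L0.adjoint := (LinearPMap.IsFormalAdjoint.le_adjoint hL0dense hform)
  -- LS† is a formal adjoint of L0, hence LS† ≤ L0†
  have hfa : L0.IsFormalAdjoint LS.adjoint := by
    intro x y
    obtain ⟨x', hx', hLx⟩ := LinearPMap.exists_of_le hLSext x
    rw [hLx, hx']
    have := (LinearPMap.adjoint_isFormalAdjoint hLSdense) y x'
    rw [← inner_conj_symm, ← this, inner_conj_symm]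
  have hLSadle : LS.adjoint ≤ L0.adjoint := hfa.le_adjoint hL0dense
  -- key: M0 formal adjoint of LS
  have hkey : M0.IsFormalAdjoint LS := by
    intro v u
    have hv0 : (v : H) ∈ L0.domain := hdom ▸ v.2
    have hvS : (v : H) ∈ LS.adjoint.domain := hLSdomeq ▸ hLSext.1 hv0
    have h1 : LS.adjoint ⟨(v : H), hvS⟩ = M0 v := by
      have e1 : LS.adjoint ⟨(v : H), hvS⟩ = L0.adjoint ⟨(v : H), hLSadle.1 hvS⟩ :=
        hLSadle.2 rfl
      have e2 : M0 v = L0.adjoint ⟨(v : H), hM0le.1 v.2⟩ := hM0le.2 rfl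
      rw [e1, e2]
    have := (LinearPMap.adjoint_isFormalAdjoint hLSdense) ⟨(v : H), hvS⟩ u
    rw [h1] at this
    exact this
  exact hkey.le_adjoint hM0dense
end

section
/- Let L_0 be a densely defined minimal operator in a Hilbert space H with associated maximal operators L̂ = M_0* and M̂ = L_0*, let L_S be a boundary correct extension of L_0 (L_0 ⊂ L_S ⊂ L̂), let L be a boundary correct extension with K = L^{-1} − L_S^{-1} (so R(K) ⊆ Ker L̂ and R(L_0) ⊆ Ker K), assume R(K) ∪ R(K*) ⊆ D(L̂) ∩ D(M̂), and let T be a linear operator on D(L̂) with Ker T = D(L_S). Then the condition "T(K* M̂ − K L̂)u = 0 for all u ∈ D(L)" is equivalent to the condition "T(K* M̂ − K L̂ + K* M̂ K L̂)v = 0 for all v ∈ D(L_S)", via the one-to-one correspondence v = (I − K L̂)u between D(L) and D(L_S) with inverse u = (I + K L̂)v. -/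
open scoped InnerProductSpace

private lemma pmap_congr {H : Type} [NormedAddCommGroup H] [InnerProductSpace ℂ H]
    (f : H →ₗ.[ℂ] H) {x y : H} (hx : x ∈ f.domain) (hy : y ∈ f.domain) (h : x = y) :
    f ⟨x, hx⟩ = f ⟨y, hy⟩ := by subst h; rfl

private lemma pmap_add {H : Type} [NormedAddCommGroup H] [InnerProductSpace ℂ H]
    (f : H →ₗ.[ℂ] H) {x y : H} (hx : x ∈ f.domain) (hy : y ∈ f.domain)
    (hxy : x + y ∈ f.domain) :
    f ⟨x + y, hxy⟩ = f ⟨x, hx⟩ + f ⟨y, hy⟩ := by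
  have : (⟨x + y, hxy⟩ : f.domain) = ⟨x, hx⟩ + ⟨y, hy⟩ := rfl
  rw [this, f.map_add]

private lemma pmap_sub {H : Type} [NormedAddCommGroup H] [InnerProductSpace ℂ H]
    (f : H →ₗ.[ℂ] H) {x y : H} (hx : x ∈ f.domain) (hy : y ∈ f.domain)
    (hxy : x - y ∈ f.domain) :
    f ⟨x - y, hxy⟩ = f ⟨x, hx⟩ - f ⟨y, hy⟩ := by
  have : (⟨x - y, hxy⟩ : f.domain) = ⟨x, hx⟩ - ⟨y, hy⟩ := rfl
  rw [this, f.map_sub]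

/-- Remark 3.3. For boundary correct extensions `L_S` and `L` of `L_0`
with `K = L⁻¹ - L_S⁻¹`, and a boundary operator `T` with `Ker T = D(L_S)`, the condition
`T(K* M̂ - K L̂)u = 0` for all `u ∈ D(L)` is equivalent to
`T(K* M̂ - K L̂ + K* M̂ K L̂)v = 0` for all `v ∈ D(L_S)`. -/
theorem boundary_condition_transfer
    {H : Type} [NormedAddCommGroup H] [InnerProductSpace ℂ H] [CompleteSpace H]
    {W : Type} [AddCommGroup W] [Module ℂ W]
    (L0 M0 : H →ₗ.[ℂ] H)
    (hL0min : IsMinimalOp L0) (hM0min : IsMinimalOp M0)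
    (hL0dense : Dense (L0.domain : Set H)) (hM0dense : Dense (M0.domain : Set H))
    (hdom : M0.domain = L0.domain)
    (hform : ∀ (u : L0.domain) (v : M0.domain), ⟪L0 u, (v : H)⟫_ℂ = ⟪(u : H), M0 v⟫_ℂ)
    -- the boundary correct extension `L_S`
    (LS : H →ₗ.[ℂ] H) (hLSext : L0 ≤ LS) (hLShat : LS ≤ M0.adjoint) (hLSclosed : LS.IsClosed)
    (LSinv : H →L[ℂ] H) (hLSinv : IsBoundedInverse LS LSinv)
    -- the boundary correct extension `L`
    (L : H →ₗ.[ℂ] H) (hLext : L0 ≤ L) (hLhat : L ≤ M0.adjoint) (hLclosed : L.IsClosed)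
    (Linv : H →L[ℂ] H) (hLinv : IsBoundedInverse L Linv)
    -- `K = L⁻¹ - L_S⁻¹` with `R(K) ⊆ Ker L̂` and `R(L_0) ⊆ Ker K`, and `K*`
    (K Kadj : H →L[ℂ] H) (hK : K = Linv - LSinv) (hKadj : Kadj = ContinuousLinearMap.adjoint K)
    (hKranLhat : ∀ f : H, ∃ h : K f ∈ M0.adjoint.domain, M0.adjoint ⟨K f, h⟩ = 0)
    (hKkerL0 : ∀ u : L0.domain, K (L0 u) = 0)
    -- `R(K) ∪ R(K*) ⊆ D(L̂) ∩ D(M̂)`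
    (hKran : ∀ f : H, (K f ∈ M0.adjoint.domain ∧ K f ∈ L0.adjoint.domain) ∧
      (Kadj f ∈ M0.adjoint.domain ∧ Kadj f ∈ L0.adjoint.domain))
    -- the boundary operator `T` with `Ker T = D(L_S)`
    (T : M0.adjoint.domain →ₗ[ℂ] W)
    (hTker : ∀ u : M0.adjoint.domain, T u = 0 ↔ (u : H) ∈ LS.domain) :
    -- `T(K* M̂ - K L̂)u = 0` for all `u ∈ D(L)` ...
    (∀ (u : H) (hu : u ∈ L.domain) (huL : u ∈ M0.adjoint.domain) (huM : u ∈ L0.adjoint.domain)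
       (hz : Kadj (L0.adjoint ⟨u, huM⟩) - K (M0.adjoint ⟨u, huL⟩) ∈ M0.adjoint.domain),
       T ⟨Kadj (L0.adjoint ⟨u, huM⟩) - K (M0.adjoint ⟨u, huL⟩), hz⟩ = 0) ↔
    -- ... iff `T(K* M̂ - K L̂ + K* M̂ K L̂)v = 0` for all `v ∈ D(L_S)`
    (∀ (v : H) (hv : v ∈ LS.domain) (hvL : v ∈ M0.adjoint.domain) (hvM : v ∈ L0.adjoint.domain)
       (hkv : K (M0.adjoint ⟨v, hvL⟩) ∈ L0.adjoint.domain)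
       (hz : Kadj (L0.adjoint ⟨v, hvM⟩) - K (M0.adjoint ⟨v, hvL⟩) +
          Kadj (L0.adjoint ⟨K (M0.adjoint ⟨v, hvL⟩), hkv⟩) ∈ M0.adjoint.domain),
       T ⟨Kadj (L0.adjoint ⟨v, hvM⟩) - K (M0.adjoint ⟨v, hvL⟩) +
          Kadj (L0.adjoint ⟨K (M0.adjoint ⟨v, hvL⟩), hkv⟩), hz⟩ = 0) := by
  constructor
  · -- from the `D(L)` condition to the `D(L_S)` condition
    intro hcond v hv hvL hvM hkv hz
    set f := M0.adjoint ⟨v, hvL⟩ with hf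
    have hLSval : LS ⟨v, hv⟩ = f := hLShat.2 rfl
    -- `u := v + K f` lies in `D(L)`
    have hLinvf : Linv f = v + K f := by
      have h2 : LSinv f = v := by rw [← hLSval]; exact hLSinv.2 ⟨v, hv⟩
      have h3 : K f = Linv f - LSinv f := by rw [hK]; rfl
      rw [h3, h2]; abel
    obtain ⟨huLdom, -⟩ := hLinv.1 f
    rw [hLinvf] at huLdom
    have hKfL : K f ∈ M0.adjoint.domain := (hKran f).1.1
    have hKfM : K f ∈ L0.adjoint.domain := (hKran f).1.2
    have huL : v + K f ∈ M0.adjoint.domain := add_mem hvL hKfL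
    have huM : v + K f ∈ L0.adjoint.domain := add_mem hvM hKfM
    -- `L̂ u = f`
    obtain ⟨hKfL', hKfL0⟩ := hKranLhat f
    have hLhatu : M0.adjoint ⟨v + K f, huL⟩ = f := by
      rw [pmap_add M0.adjoint hvL hKfL huL, pmap_congr M0.adjoint hKfL hKfL' rfl, hKfL0,
        add_zero]
    -- `M̂ u = M̂ v + M̂ (K f)`
    have hMhatu : L0.adjoint ⟨v + K f, huM⟩ =
        L0.adjoint ⟨v, hvM⟩ + L0.adjoint ⟨K f, hkv⟩ := by
      rw [pmap_add L0.adjoint hvM hKfM huM, pmap_congr L0.adjoint hKfM hkv rfl]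
    -- the two expressions agree
    have hexpr : Kadj (L0.adjoint ⟨v + K f, huM⟩) - K (M0.adjoint ⟨v + K f, huL⟩) =
        Kadj (L0.adjoint ⟨v, hvM⟩) - K f + Kadj (L0.adjoint ⟨K f, hkv⟩) := by
      rw [hMhatu, hLhatu, map_add]; abel
    have hz' : Kadj (L0.adjoint ⟨v + K f, huM⟩) - K (M0.adjoint ⟨v + K f, huL⟩) ∈
        M0.adjoint.domain := by rw [hexpr]; exact hz
    have := hcond (v + K f) huLdom huL huM hz'
    rw [show (⟨Kadj (L0.adjoint ⟨v + K f, huM⟩) - K (M0.adjoint ⟨v + K f, huL⟩), hz'⟩ :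
        M0.adjoint.domain) = ⟨Kadj (L0.adjoint ⟨v, hvM⟩) - K f +
          Kadj (L0.adjoint ⟨K f, hkv⟩), hz⟩ from Subtype.ext hexpr] at this
    exact this
  · -- from the `D(L_S)` condition to the `D(L)` condition
    intro hcond u hu huL huM hz
    set g := M0.adjoint ⟨u, huL⟩ with hg
    have hLval : L ⟨u, hu⟩ = g := hLhat.2 rfl
    -- `v := u - K g` lies in `D(L_S)`
    have hLSinvg : LSinv g = u - K g := by
      have h2 : Linv g = u := by rw [← hLval]; exact hLinv.2 ⟨u, hu⟩
      have h3 : K g = Linv g - LSinv g := by rw [hK]; rfl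
      rw [eq_sub_iff_add_eq, ← h2, h3]; abel
    obtain ⟨hvLSdom, -⟩ := hLSinv.1 g
    rw [hLSinvg] at hvLSdom
    have hKgL : K g ∈ M0.adjoint.domain := (hKran g).1.1
    have hKgM : K g ∈ L0.adjoint.domain := (hKran g).1.2
    have hvL : u - K g ∈ M0.adjoint.domain := sub_mem huL hKgL
    have hvM : u - K g ∈ L0.adjoint.domain := sub_mem huM hKgM
    -- `L̂ v = g`
    obtain ⟨hKgL', hKgL0⟩ := hKranLhat g
    have hLhatv : M0.adjoint ⟨u - K g, hvL⟩ = g := by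
      rw [pmap_sub M0.adjoint huL hKgL hvL, pmap_congr M0.adjoint hKgL hKgL' rfl, hKgL0,
        sub_zero]
    have hkv : K (M0.adjoint ⟨u - K g, hvL⟩) ∈ L0.adjoint.domain := by rw [hLhatv]; exact hKgM
    -- `M̂ v = M̂ u - M̂ (K g)`
    have hMhatv : L0.adjoint ⟨u - K g, hvM⟩ =
        L0.adjoint ⟨u, huM⟩ - L0.adjoint ⟨K g, hKgM⟩ :=
      pmap_sub L0.adjoint huM hKgM hvM
    -- the two expressions agree
    have hexpr : Kadj (L0.adjoint ⟨u - K g, hvM⟩) - K (M0.adjoint ⟨u - K g, hvL⟩) +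
        Kadj (L0.adjoint ⟨K (M0.adjoint ⟨u - K g, hvL⟩), hkv⟩) =
        Kadj (L0.adjoint ⟨u, huM⟩) - K g := by
      rw [hMhatv, map_sub,
        pmap_congr L0.adjoint hkv hKgM (by rw [hLhatv]), hLhatv]
      abel
    have hz' : Kadj (L0.adjoint ⟨u - K g, hvM⟩) - K (M0.adjoint ⟨u - K g, hvL⟩) +
        Kadj (L0.adjoint ⟨K (M0.adjoint ⟨u - K g, hvL⟩), hkv⟩) ∈ M0.adjoint.domain := by
      rw [hexpr]; exact hz
    have := hcond (u - K g) hvLSdom hvL hvM hkv hz'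
    rw [show (⟨Kadj (L0.adjoint ⟨u - K g, hvM⟩) - K (M0.adjoint ⟨u - K g, hvL⟩) +
          Kadj (L0.adjoint ⟨K (M0.adjoint ⟨u - K g, hvL⟩), hkv⟩), hz'⟩ :
        M0.adjoint.domain) = ⟨Kadj (L0.adjoint ⟨u, huM⟩) - K g, hz⟩
        from Subtype.ext hexpr] at this
    exact this
end

section
/- Let L_0 be a densely defined minimal operator in a Hilbert space H with associated maximal operator L̂ = M_0*, and let L_S be a boundary correct extension of L_0 (L_0 ⊂ L_S ⊂ L̂). Equip D(L̂) with the graph scalar product (u,v)_G = (u,v) + (L̂u, L̂v), making it a Hilbert space G_{L̂}. Then the operator Γ_{L_S} = I − L_S^{-1} L̂ is a bounded projection on G_{L̂} (Γ_{L_S}² = Γ_{L_S}) with Ker Γ_{L_S} = D(L_S) and R(Γ_{L_S}) = Ker L̂; equivalently, L_S^{-1} L̂ is a bounded projection of G_{L̂} onto the subspace D(L_S). -/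
open scoped InnerProductSpace

/-- The operator `Γ_{L_S} = I - L_S^{-1} L̂` applied to an element `u ∈ D(L̂)`. -/
noncomputable def GammaOp {H : Type} [NormedAddCommGroup H] [InnerProductSpace ℂ H]
    (Lhat : H →ₗ.[ℂ] H) (LSinv : H →L[ℂ] H) (u : Lhat.domain) : H :=
  (u : H) - LSinv (Lhat u)

/-- For a boundary correct extension `L_S` of `L_0` (w.r.t. `L̂ = M_0*`),
the operator `Γ_{L_S} = I - L_S⁻¹ L̂` is a bounded (w.r.t. the graph norm of `L̂`)
projection with `Ker Γ_{L_S} = D(L_S)` and `R(Γ_{L_S}) = Ker L̂`; equivalently,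
`L_S⁻¹ L̂` is a bounded projection of the graph space onto `D(L_S)`. -/
theorem gamma_is_bounded_projection
    {H : Type} [NormedAddCommGroup H] [InnerProductSpace ℂ H] [CompleteSpace H]
    (L0 M0 : H →ₗ.[ℂ] H)
    (hL0min : IsMinimalOp L0) (hM0min : IsMinimalOp M0)
    (hL0dense : Dense (L0.domain : Set H)) (hM0dense : Dense (M0.domain : Set H))
    (hdom : M0.domain = L0.domain)
    (hform : ∀ (u : L0.domain) (v : M0.domain), ⟪L0 u, (v : H)⟫_ℂ = ⟪(u : H), M0 v⟫_ℂ)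
    -- the boundary correct extension `L_S`
    (LS : H →ₗ.[ℂ] H) (hLSext : L0 ≤ LS) (hLShat : LS ≤ M0.adjoint) (hLSclosed : LS.IsClosed)
    (LSinv : H →L[ℂ] H) (hLSinv : IsBoundedInverse LS LSinv) :
    -- `Γ_{L_S}` maps `D(L̂)` into `D(L̂)` (in fact into `Ker L̂`) ...
    (∀ u : M0.adjoint.domain, ∃ h : GammaOp M0.adjoint LSinv u ∈ M0.adjoint.domain,
      M0.adjoint ⟨GammaOp M0.adjoint LSinv u, h⟩ = 0) ∧
    -- ... it is idempotent: `Γ_{L_S}² = Γ_{L_S}` ...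
    (∀ (u : M0.adjoint.domain) (h : GammaOp M0.adjoint LSinv u ∈ M0.adjoint.domain),
      GammaOp M0.adjoint LSinv ⟨GammaOp M0.adjoint LSinv u, h⟩ = GammaOp M0.adjoint LSinv u) ∧
    -- ... its kernel is `D(L_S)` ...
    (∀ u : M0.adjoint.domain, GammaOp M0.adjoint LSinv u = 0 ↔ (u : H) ∈ LS.domain) ∧
    -- ... its range is `Ker L̂` ...
    (∀ w : M0.adjoint.domain, M0.adjoint w = 0 →
      ∃ u : M0.adjoint.domain, GammaOp M0.adjoint LSinv u = (w : H)) ∧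
    -- ... and it is bounded with respect to the graph norm of `L̂`:
    (∃ C : ℝ, 0 < C ∧ ∀ (u : M0.adjoint.domain)
      (h : GammaOp M0.adjoint LSinv u ∈ M0.adjoint.domain),
      ‖GammaOp M0.adjoint LSinv u‖ ^ 2 +
        ‖M0.adjoint ⟨GammaOp M0.adjoint LSinv u, h⟩‖ ^ 2 ≤
        C ^ 2 * (‖(u : H)‖ ^ 2 + ‖M0.adjoint u‖ ^ 2)) ∧
    -- equivalently, `L_S⁻¹ L̂` is a bounded projection of the graph space onto `D(L_S)`:
    (∀ u : M0.adjoint.domain, LSinv (M0.adjoint u) ∈ LS.domain) ∧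
    (∀ u : M0.adjoint.domain, (u : H) ∈ LS.domain → LSinv (M0.adjoint u) = (u : H)) ∧
    (∃ C : ℝ, 0 < C ∧ ∀ (u : M0.adjoint.domain)
      (h : LSinv (M0.adjoint u) ∈ M0.adjoint.domain),
      ‖LSinv (M0.adjoint u)‖ ^ 2 + ‖M0.adjoint ⟨LSinv (M0.adjoint u), h⟩‖ ^ 2 ≤
        C ^ 2 * (‖(u : H)‖ ^ 2 + ‖M0.adjoint u‖ ^ 2)) := by
  set Lhat := M0.adjoint with hLhatdef
  -- key fact: for any f, LSinv f lies in D(L̂) and L̂ (LSinv f) = f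
  have key : ∀ f : H, ∃ h : LSinv f ∈ Lhat.domain, Lhat ⟨LSinv f, h⟩ = f := by
    intro f
    obtain ⟨hf, hval⟩ := hLSinv.1 f
    refine ⟨hLShat.1 hf, ?_⟩
    exact (hLShat.2 (x := ⟨LSinv f, hf⟩) (y := ⟨LSinv f, hLShat.1 hf⟩) rfl).symm.trans hval
  -- Γu ∈ D(L̂)
  have hmem : ∀ u : Lhat.domain, GammaOp Lhat LSinv u ∈ Lhat.domain := fun u =>
    Lhat.domain.sub_mem u.2 (key (Lhat u)).1
  -- L̂ (Γ u) = 0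
  have hzero : ∀ (u : Lhat.domain) (h : GammaOp Lhat LSinv u ∈ Lhat.domain),
      Lhat ⟨GammaOp Lhat LSinv u, h⟩ = 0 := by
    intro u h
    have heq : (⟨GammaOp Lhat LSinv u, h⟩ : Lhat.domain)
        = u - ⟨LSinv (Lhat u), (key (Lhat u)).1⟩ := by
      apply Subtype.ext; simp [GammaOp]
    rw [heq, Lhat.map_sub, (key (Lhat u)).2, sub_self]
  -- if u ∈ D(L_S) then LSinv (L̂ u) = u
  have hfix : ∀ u : Lhat.domain, (u : H) ∈ LS.domain → LSinv (Lhat u) = (u : H) := by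
    intro u hu
    have h1 : LS ⟨(u : H), hu⟩ = Lhat u := hLShat.2 rfl
    have h2 := hLSinv.2 ⟨(u : H), hu⟩
    rw [h1] at h2
    exact h2
  have hK : (0 : ℝ) ≤ ‖LSinv‖ := norm_nonneg _
  refine ⟨fun u => ⟨hmem u, hzero u _⟩, ?_, ?_, ?_, ?_, ?_, hfix, ?_⟩
  · -- idempotent
    intro u h
    have heq : GammaOp Lhat LSinv ⟨GammaOp Lhat LSinv u, h⟩
        = GammaOp Lhat LSinv u - LSinv (Lhat ⟨GammaOp Lhat LSinv u, h⟩) := rfl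
    rw [heq, hzero u h, map_zero, sub_zero]
  · -- kernel = D(L_S)
    intro u
    constructor
    · intro hΓ
      have : (u : H) = LSinv (Lhat u) := by
        have := sub_eq_zero.mp hΓ
        exact this
      rw [this]
      exact (hLSinv.1 (Lhat u)).1
    · intro hu
      show (u : H) - LSinv (Lhat u) = 0
      rw [hfix u hu, sub_self]
  · -- range = Ker L̂
    intro w hw
    refine ⟨w, ?_⟩
    show (w : H) - LSinv (Lhat w) = (w : H)
    rw [hw, map_zero, sub_zero]
  · -- boundedness of Γ
    refine ⟨2 + 2 * ‖LSinv‖, by positivity, ?_⟩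
    intro u h
    rw [hzero u h, norm_zero]
    have h1 : ‖GammaOp Lhat LSinv u‖ ≤ ‖(u : H)‖ + ‖LSinv‖ * ‖Lhat u‖ := by
      refine (norm_sub_le _ _).trans ?_
      exact add_le_add le_rfl (LSinv.le_opNorm _)
    have h2 : (0 : ℝ) ≤ ‖(u : H)‖ := norm_nonneg _
    have h3 : (0 : ℝ) ≤ ‖Lhat u‖ := norm_nonneg _
    have h4 : (0 : ℝ) ≤ ‖GammaOp Lhat LSinv u‖ := norm_nonneg _
    nlinarith [sq_nonneg (‖(u : H)‖ - ‖Lhat u‖), sq_nonneg (‖LSinv‖ * ‖Lhat u‖ - ‖(u : H)‖),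
      mul_nonneg hK h3, sq_nonneg ‖LSinv‖, mul_nonneg (mul_nonneg hK hK) (sq_nonneg ‖Lhat u‖)]
  · -- LSinv (L̂ u) ∈ D(L_S)
    intro u
    exact (hLSinv.1 (Lhat u)).1
  · -- boundedness of LSinv ∘ L̂
    refine ⟨2 + 2 * ‖LSinv‖, by positivity, ?_⟩
    intro u h
    have hval : Lhat ⟨LSinv (Lhat u), h⟩ = Lhat u := (key (Lhat u)).2
    rw [hval]
    have h1 : ‖LSinv (Lhat u)‖ ≤ ‖LSinv‖ * ‖Lhat u‖ := LSinv.le_opNorm _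
    have h2 : (0 : ℝ) ≤ ‖(u : H)‖ := norm_nonneg _
    have h3 : (0 : ℝ) ≤ ‖Lhat u‖ := norm_nonneg _
    have h4 : (0 : ℝ) ≤ ‖LSinv (Lhat u)‖ := norm_nonneg _
    nlinarith [mul_nonneg hK h3, sq_nonneg ‖LSinv‖,
      mul_nonneg (mul_nonneg hK hK) (sq_nonneg ‖Lhat u‖)]
end

section
/- Let L_0 be a densely defined minimal operator in a Hilbert space H with associated maximal operator L̂ = M_0*, let L_S be a boundary correct extension of L_0, and let L be another boundary correct extension with L^{-1} = L_S^{-1} + K, where K is a bounded operator on H with R(K) ⊆ Ker L̂ and R(L_0) ⊆ Ker K. Then (I − K L̂) maps D(L) onto D(L_S), (I + K L̂) maps D(L_S) onto D(L), and these maps are mutually inverse bijections; moreover (I − K L̂)(I + K L̂) = I and (I + K L̂)(I − K L̂) = I on D(L̂). -/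
open scoped InnerProductSpace

/-- For boundary correct extensions `L_S`, `L` of `L_0` with
`L⁻¹ = L_S⁻¹ + K`, `R(K) ⊆ Ker L̂`, `R(L_0) ⊆ Ker K`: `(I - K L̂)` maps `D(L)` onto
`D(L_S)`, `(I + K L̂)` maps `D(L_S)` onto `D(L)`, these are mutually inverse bijections,
and `(I - K L̂)(I + K L̂) = I`, `(I + K L̂)(I - K L̂) = I` on `D(L̂)`. -/
theorem one_to_one_correspondence_of_domains
    {H : Type} [NormedAddCommGroup H] [InnerProductSpace ℂ H] [CompleteSpace H]
    (L0 M0 : H →ₗ.[ℂ] H)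
    (hL0min : IsMinimalOp L0) (hM0min : IsMinimalOp M0)
    (hL0dense : Dense (L0.domain : Set H)) (hM0dense : Dense (M0.domain : Set H))
    (hdom : M0.domain = L0.domain)
    (hform : ∀ (u : L0.domain) (v : M0.domain), ⟪L0 u, (v : H)⟫_ℂ = ⟪(u : H), M0 v⟫_ℂ)
    -- the boundary correct extension `L_S`
    (LS : H →ₗ.[ℂ] H) (hLSext : L0 ≤ LS) (hLShat : LS ≤ M0.adjoint) (hLSclosed : LS.IsClosed)
    (LSinv : H →L[ℂ] H) (hLSinv : IsBoundedInverse LS LSinv)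
    -- the boundary correct extension `L`, with `L⁻¹ = L_S⁻¹ + K`
    (L : H →ₗ.[ℂ] H) (hLext : L0 ≤ L) (hLhat : L ≤ M0.adjoint) (hLclosed : L.IsClosed)
    (Linv : H →L[ℂ] H) (hLinv : IsBoundedInverse L Linv)
    (K : H →L[ℂ] H) (hK : ∀ f : H, Linv f = LSinv f + K f)
    (hKranLhat : ∀ f : H, ∃ h : K f ∈ M0.adjoint.domain, M0.adjoint ⟨K f, h⟩ = 0)
    (hKkerL0 : ∀ u : L0.domain, K (L0 u) = 0) :
    -- `(I - K L̂)` maps `D(L)` into `D(L_S)` ...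
    (∀ (u : H) (hu : u ∈ L.domain) (huL : u ∈ M0.adjoint.domain),
      u - K (M0.adjoint ⟨u, huL⟩) ∈ LS.domain) ∧
    -- ... and onto `D(L_S)` ...
    (∀ (v : H), v ∈ LS.domain → ∃ (u : H) (hu : u ∈ L.domain) (huL : u ∈ M0.adjoint.domain),
      u - K (M0.adjoint ⟨u, huL⟩) = v) ∧
    -- ... `(I + K L̂)` maps `D(L_S)` into `D(L)` ...
    (∀ (v : H) (hv : v ∈ LS.domain) (hvL : v ∈ M0.adjoint.domain),
      v + K (M0.adjoint ⟨v, hvL⟩) ∈ L.domain) ∧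
    -- ... and onto `D(L)` ...
    (∀ (u : H), u ∈ L.domain → ∃ (v : H) (hv : v ∈ LS.domain) (hvL : v ∈ M0.adjoint.domain),
      v + K (M0.adjoint ⟨v, hvL⟩) = u) ∧
    -- ... and `(I + K L̂)(I - K L̂) = I` and `(I - K L̂)(I + K L̂) = I` on `D(L̂)`:
    (∀ (u : M0.adjoint.domain) (hw : (u : H) - K (M0.adjoint u) ∈ M0.adjoint.domain),
      ((u : H) - K (M0.adjoint u)) +
        K (M0.adjoint ⟨(u : H) - K (M0.adjoint u), hw⟩) = (u : H)) ∧
    (∀ (u : M0.adjoint.domain) (hw : (u : H) + K (M0.adjoint u) ∈ M0.adjoint.domain),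
      ((u : H) + K (M0.adjoint u)) -
        K (M0.adjoint ⟨(u : H) + K (M0.adjoint u), hw⟩) = (u : H)) := by
  have hLeq : ∀ (u : H) (hu : u ∈ L.domain) (huL : u ∈ M0.adjoint.domain),
      M0.adjoint ⟨u, huL⟩ = L ⟨u, hu⟩ := fun u hu huL => (hLhat.2 rfl).symm
  have hLSeq : ∀ (v : H) (hv : v ∈ LS.domain) (hvL : v ∈ M0.adjoint.domain),
      M0.adjoint ⟨v, hvL⟩ = LS ⟨v, hv⟩ := fun v hv hvL => (hLShat.2 rfl).symm
  refine ⟨?_, ?_, ?_, ?_, ?_, ?_⟩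
  · intro u hu huL
    set f := L ⟨u, hu⟩ with hf
    have h1 : Linv f = u := hLinv.2 ⟨u, hu⟩
    have h2 : LSinv f = u - K f := by
      have := hK f; rw [h1] at this; rw [this]; abel
    rw [hLeq u hu huL, ← hf, ← h2]
    exact (hLSinv.1 f).1
  · intro v hv
    set f := LS ⟨v, hv⟩ with hf
    obtain ⟨hu, hLu⟩ := hLinv.1 f
    refine ⟨Linv f, hu, hLhat.1 hu, ?_⟩
    rw [hLeq _ hu (hLhat.1 hu), hLu, hK f, hLSinv.2 ⟨v, hv⟩]
    abel
  · intro v hv hvL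
    set f := LS ⟨v, hv⟩ with hf
    have h1 : LSinv f = v := hLSinv.2 ⟨v, hv⟩
    have h2 : Linv f = v + K f := by rw [hK f, h1]
    rw [hLSeq v hv hvL, ← hf, ← h2]
    exact (hLinv.1 f).1
  · intro u hu
    set f := L ⟨u, hu⟩ with hf
    obtain ⟨hv, hLSv⟩ := hLSinv.1 f
    refine ⟨LSinv f, hv, hLShat.1 hv, ?_⟩
    rw [hLSeq _ hv (hLShat.1 hv), hLSv, ← hK f, hLinv.2 ⟨u, hu⟩]
  · intro u hw
    obtain ⟨hk, hk0⟩ := hKranLhat (M0.adjoint u)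
    have heq : (⟨(u : H) - K (M0.adjoint u), hw⟩ : M0.adjoint.domain) =
        u - ⟨K (M0.adjoint u), hk⟩ := by ext; rfl
    rw [heq, M0.adjoint.map_sub, hk0, sub_zero]
    abel
  · intro u hw
    obtain ⟨hk, hk0⟩ := hKranLhat (M0.adjoint u)
    have heq : (⟨(u : H) + K (M0.adjoint u), hw⟩ : M0.adjoint.domain) =
        u + ⟨K (M0.adjoint u), hk⟩ := by ext; rfl
    rw [heq, M0.adjoint.map_add, hk0, add_zero]
    abel
end

section
/- Let L_0 be a densely defined minimal operator in a Hilbert space H with associated maximal operator L̂ = M_0*, let L_S be a boundary correct extension of L_0, and let L be another boundary correct extension with L^{-1} = L_S^{-1} + K, where K is a bounded operator on H with R(K) ⊆ Ker L̂ and R(L_0) ⊆ Ker K. Then the domain of L admits the description D(L) = { u ∈ D(L̂) : ((I − K L̂)u, L_S* v) = (L̂ u, v) for all v ∈ D(L_S*) }. -/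
open scoped InnerProductSpace

/-- For boundary correct extensions `L_S`, `L` of `L_0` with
`L⁻¹ = L_S⁻¹ + K`, `R(K) ⊆ Ker L̂`, `R(L_0) ⊆ Ker K`, the domain of `L` is
`D(L) = {u ∈ D(L̂) : ((I - K L̂)u, L_S* v) = (L̂ u, v) for all v ∈ D(L_S*)}`. -/
theorem domain_description_via_adjoint
    {H : Type} [NormedAddCommGroup H] [InnerProductSpace ℂ H] [CompleteSpace H]
    (L0 M0 : H →ₗ.[ℂ] H)
    (hL0min : IsMinimalOp L0) (hM0min : IsMinimalOp M0)
    (hL0dense : Dense (L0.domain : Set H)) (hM0dense : Dense (M0.domain : Set H))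
    (hdom : M0.domain = L0.domain)
    (hform : ∀ (u : L0.domain) (v : M0.domain), ⟪L0 u, (v : H)⟫_ℂ = ⟪(u : H), M0 v⟫_ℂ)
    -- the boundary correct extension `L_S`
    (LS : H →ₗ.[ℂ] H) (hLSext : L0 ≤ LS) (hLShat : LS ≤ M0.adjoint) (hLSclosed : LS.IsClosed)
    (LSinv : H →L[ℂ] H) (hLSinv : IsBoundedInverse LS LSinv)
    -- the boundary correct extension `L`, with `L⁻¹ = L_S⁻¹ + K`
    (L : H →ₗ.[ℂ] H) (hLext : L0 ≤ L) (hLhat : L ≤ M0.adjoint) (hLclosed : L.IsClosed)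
    (Linv : H →L[ℂ] H) (hLinv : IsBoundedInverse L Linv)
    (K : H →L[ℂ] H) (hK : ∀ f : H, Linv f = LSinv f + K f)
    (hKranLhat : ∀ f : H, ∃ h : K f ∈ M0.adjoint.domain, M0.adjoint ⟨K f, h⟩ = 0)
    (hKkerL0 : ∀ u : L0.domain, K (L0 u) = 0) :
    ∀ u : H, u ∈ L.domain ↔
      ∃ hu : u ∈ M0.adjoint.domain, ∀ v : LS.adjoint.domain,
        ⟪u - K (M0.adjoint ⟨u, hu⟩), LS.adjoint v⟫_ℂ = ⟪M0.adjoint ⟨u, hu⟩, (v : H)⟫_ℂ := by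
  classical
  have hLSdense : Dense (LS.domain : Set H) := by
    have hsub : (L0.domain : Set H) ⊆ (LS.domain : Set H) := hLSext.1
    exact hL0dense.mono hsub
  intro u
  constructor
  · intro hu
    have huhat : u ∈ M0.adjoint.domain := hLhat.1 hu
    refine ⟨huhat, ?_⟩
    set f : H := M0.adjoint ⟨u, huhat⟩ with hfdef
    have hLf : L ⟨u, hu⟩ = f := hLhat.2 (x := ⟨u, hu⟩) (y := ⟨u, huhat⟩) rfl
    have hinv : Linv f = u := by
      rw [← hLf]; exact hLinv.2 ⟨u, hu⟩
    obtain ⟨hwmem, hweq⟩ := hLSinv.1 f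
    have hsub : u - K f = LSinv f := by
      have := hK f
      rw [hinv] at this
      rw [this]; abel
    intro v
    rw [hsub]
    have h1 : ⟪LS.adjoint v, (LSinv f : H)⟫_ℂ = ⟪(v : H), LS ⟨LSinv f, hwmem⟩⟫_ℂ :=
      LinearPMap.adjoint_isFormalAdjoint hLSdense v ⟨LSinv f, hwmem⟩
    rw [hweq] at h1
    calc ⟪LSinv f, LS.adjoint v⟫_ℂ
        = (starRingEnd ℂ) ⟪LS.adjoint v, LSinv f⟫_ℂ := (inner_conj_symm _ _).symm
      _ = (starRingEnd ℂ) ⟪(v : H), f⟫_ℂ := by rw [h1]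
      _ = ⟪f, (v : H)⟫_ℂ := inner_conj_symm _ _
  · rintro ⟨hu, hP⟩
    set f : H := M0.adjoint ⟨u, hu⟩ with hfdef
    obtain ⟨hwmem, hweq⟩ := hLSinv.1 f
    -- show u - K f = LSinv f by testing against all g ∈ H
    have hkey : u - K f = LSinv f := by
      apply ext_inner_right ℂ
      intro g
      set v : H := ContinuousLinearMap.adjoint LSinv g with hvdef
      have hvmem : v ∈ LS.adjoint.domain := by
        apply LinearPMap.mem_adjoint_domain_of_exists
        refine ⟨g, fun x => ?_⟩
        rw [hvdef, ContinuousLinearMap.adjoint_inner_left, hLSinv.2 x]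
      have hveq : LS.adjoint ⟨v, hvmem⟩ = g := by
        apply LinearPMap.adjoint_apply_eq hLSdense
        intro x
        show ⟪g, (x : H)⟫_ℂ = ⟪v, LS x⟫_ℂ
        rw [hvdef, ContinuousLinearMap.adjoint_inner_left, hLSinv.2 x]
      have := hP ⟨v, hvmem⟩
      rw [hveq] at this
      rw [this]
      simp only [hvdef]
      rw [ContinuousLinearMap.adjoint_inner_right]
    have hinv : Linv f = u := by
      rw [hK f, ← hkey]; abel
    obtain ⟨hmem, -⟩ := hLinv.1 f
    rw [hinv] at hmem
    exact hmem
end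

section
/- Let L_0 be a densely defined symmetric minimal operator in a Hilbert space H (so M_0 = L_0 and L̂ = M̂ = L_0*), and let L_N be a self-adjoint correct extension of L_0. Let L be a boundary correct extension of L_0 with L^{-1} = L_N^{-1} + K, where K is a bounded operator on H with R(K) ⊆ Ker L̂ and R(L_0) ⊆ Ker K. Then L is self-adjoint if and only if K = K*. -/
open scoped InnerProductSpace

/-!
An operator with a bounded everywhere-defined inverse is self-adjoint exactly when its
inverse is: symmetry transfers between `T` and `T⁻¹` through `⟪T u, v⟫ = ⟪T u, T⁻¹ (T v)⟫`,
and a symmetric operator that is onto `H` admits no proper symmetric extension, so `T† = T`.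
Since `L_N⁻¹` is self-adjoint, `L⁻¹ = L_N⁻¹ + K` is self-adjoint if and only if `K` is.
-/

namespace IsBoundedInverse

open LinearPMap

variable {H : Type} [NormedAddCommGroup H] [InnerProductSpace ℂ H]
  {T : H →ₗ.[ℂ] H} {Tinv : H →L[ℂ] H}

theorem isFormalAdjoint_self_iff (hT : IsBoundedInverse T Tinv) :
    T.IsFormalAdjoint T ↔ (Tinv : H →ₗ[ℂ] H).IsSymmetric := by
  constructor
  · intro hsymm f g
    obtain ⟨hf, hTf⟩ := hT.1 f
    obtain ⟨hg, hTg⟩ := hT.1 g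
    simpa only [ContinuousLinearMap.coe_coe, hTf, hTg] using
      (hsymm ⟨Tinv f, hf⟩ ⟨Tinv g, hg⟩).symm
  · intro hsymm u v
    calc ⟪T u, (v : H)⟫_ℂ = ⟪T u, Tinv (T v)⟫_ℂ := by rw [hT.2 v]
    _ = ⟪Tinv (T u), T v⟫_ℂ := (hsymm _ _).symm
    _ = ⟪(u : H), T v⟫_ℂ := by rw [hT.2 u]

variable [CompleteSpace H]

theorem adjoint_le_of_isSymmetric (hT : IsBoundedInverse T Tinv)
    (hdense : Dense (T.domain : Set H))
    (hsymm : (Tinv : H →ₗ[ℂ] H).IsSymmetric) : T† ≤ T := by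
  have inv_adjoint : ∀ y : T†.domain, Tinv (T† y) = y := by
    intro y
    refine ext_inner_right ℂ fun f => ?_
    obtain ⟨hf, hTf⟩ := hT.1 f
    calc ⟪Tinv (T† y), f⟫_ℂ = ⟪T† y, Tinv f⟫_ℂ := hsymm _ _
    _ = ⟪(y : H), T ⟨Tinv f, hf⟩⟫_ℂ := adjoint_isFormalAdjoint hdense y ⟨Tinv f, hf⟩
    _ = ⟪(y : H), f⟫_ℂ := by rw [hTf]
  refine ⟨fun y hy => ?_, fun y x hyx => ?_⟩
  · simpa only [inv_adjoint ⟨y, hy⟩] using (hT.1 (T† ⟨y, hy⟩)).1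
  · obtain ⟨hmem, hTy⟩ := hT.1 (T† y)
    rw [← hTy]
    congr 1
    exact Subtype.ext ((inv_adjoint y).trans hyx)

theorem isSelfAdjoint_iff (hT : IsBoundedInverse T Tinv)
    (hdense : Dense (T.domain : Set H)) : IsSelfAdjoint T ↔ IsSelfAdjoint Tinv := by
  rw [ContinuousLinearMap.isSelfAdjoint_iff_isSymmetric, ← hT.isFormalAdjoint_self_iff,
    isSelfAdjoint_def]
  refine ⟨fun h => ?_, fun h => ?_⟩
  · simpa only [h] using adjoint_isFormalAdjoint hdense (T := T)
  · exact le_antisymm (hT.adjoint_le_of_isSymmetric hdense (hT.isFormalAdjoint_self_iff.1 h))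
      (h.le_adjoint hdense)

end IsBoundedInverse

theorem selfadjoint_extension_iff_K_selfadjoint_general
    {H : Type} [NormedAddCommGroup H] [InnerProductSpace ℂ H] [CompleteSpace H]
    (L0 : H →ₗ.[ℂ] H)
    (hL0dense : Dense (L0.domain : Set H))
    -- the self-adjoint correct extension `L_N`
    (LN : H →ₗ.[ℂ] H) (hLNext : L0 ≤ LN) (hLNsa : LN.adjoint = LN)
    (LNinv : H →L[ℂ] H) (hLNinv : IsBoundedInverse LN LNinv)
    -- the boundary correct extension `L`, with `L⁻¹ = L_N⁻¹ + K`
    (L : H →ₗ.[ℂ] H) (hLext : L0 ≤ L)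
    (Linv : H →L[ℂ] H) (hLinv : IsBoundedInverse L Linv)
    (K : H →L[ℂ] H) (hK : ∀ f : H, Linv f = LNinv f + K f) :
    L.adjoint = L ↔ ContinuousLinearMap.adjoint K = K := by
  have hLNinv_sa : IsSelfAdjoint LNinv :=
    (hLNinv.isSelfAdjoint_iff (hL0dense.mono hLNext.1)).1 hLNsa
  have hLinv_eq : Linv = LNinv + K := ContinuousLinearMap.ext hK
  rw [← LinearPMap.isSelfAdjoint_def, hLinv.isSelfAdjoint_iff (hL0dense.mono hLext.1),
    ← ContinuousLinearMap.isSelfAdjoint_iff', hLinv_eq]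
  exact ⟨fun h => by simpa using h.sub hLNinv_sa, hLNinv_sa.add⟩

/-- Remark 4.5. Let `L_0` be a densely defined symmetric minimal operator
(so `L̂ = L_0*`), `L_N` a self-adjoint correct extension of `L_0`, and `L` a boundary correct
extension with `L⁻¹ = L_N⁻¹ + K`, `R(K) ⊆ Ker L̂`, `R(L_0) ⊆ Ker K`.
Then `L` is self-adjoint iff `K = K*`. -/
theorem selfadjoint_extension_iff_K_selfadjoint
    {H : Type} [NormedAddCommGroup H] [InnerProductSpace ℂ H] [CompleteSpace H]
    (L0 : H →ₗ.[ℂ] H)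
    (hL0min : IsMinimalOp L0) (hL0dense : Dense (L0.domain : Set H))
    (hL0symm : ∀ u v : L0.domain, ⟪L0 u, (v : H)⟫_ℂ = ⟪(u : H), L0 v⟫_ℂ)
    -- the self-adjoint correct extension `L_N`
    (LN : H →ₗ.[ℂ] H) (hLNext : L0 ≤ LN) (hLNsa : LN.adjoint = LN)
    (LNinv : H →L[ℂ] H) (hLNinv : IsBoundedInverse LN LNinv)
    -- the boundary correct extension `L`, with `L⁻¹ = L_N⁻¹ + K`
    (L : H →ₗ.[ℂ] H) (hLext : L0 ≤ L) (hLhat : L ≤ L0.adjoint) (hLclosed : L.IsClosed)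
    (Linv : H →L[ℂ] H) (hLinv : IsBoundedInverse L Linv)
    (K : H →L[ℂ] H) (hK : ∀ f : H, Linv f = LNinv f + K f)
    (hKranLhat : ∀ f : H, ∃ h : K f ∈ L0.adjoint.domain, L0.adjoint ⟨K f, h⟩ = 0)
    (hKkerL0 : ∀ u : L0.domain, K (L0 u) = 0) :
    L.adjoint = L ↔ ContinuousLinearMap.adjoint K = K :=
  selfadjoint_extension_iff_K_selfadjoint_general L0 hL0dense LN hLNext hLNsa LNinv hLNinv L hLext
    Linv hLinv K hK
end

section
/- Let L̂ be a maximal linear operator in a Hilbert space H and let L be a correct restriction of L̂ (L ⊂ L̂, with bounded everywhere-defined L^{-1}). For every bounded linear operator K on H with R(K) ⊆ Ker L̂, the operator L^{-1} + K is injective and its inverse L_K = (L^{-1} + K)^{-1}, defined on R(L^{-1} + K), is a correct restriction of L̂. Conversely, every correct restriction of L̂ is of this form: if L₁ is a correct restriction of L̂, then K := L₁^{-1} − L^{-1} is a bounded operator on H with R(K) ⊆ Ker L̂. -/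
open scoped InnerProductSpace

/-- A maximal operator: closed, surjective, with nontrivial kernel. -/
def IsMaximalOp {H : Type} [NormedAddCommGroup H] [InnerProductSpace ℂ H]
    (T : H →ₗ.[ℂ] H) : Prop :=
  T.IsClosed ∧ (∀ f : H, ∃ u : T.domain, T u = f) ∧ ∃ u : T.domain, T u = 0 ∧ (u : H) ≠ 0


/-- Description of all correct restrictions of a maximal operator `L̂`
in terms of one fixed correct restriction `L`. -/
theorem correct_restrictions_description
    {H : Type} [NormedAddCommGroup H] [InnerProductSpace ℂ H] [CompleteSpace H]
    (Lhat : H →ₗ.[ℂ] H) (hmax : IsMaximalOp Lhat)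
    (L : H →ₗ.[ℂ] H) (hLrest : L ≤ Lhat) (hLclosed : L.IsClosed)
    (Linv : H →L[ℂ] H) (hLinv : IsBoundedInverse L Linv) :
    -- for every bounded `K` with `R(K) ⊆ Ker L̂`, `L⁻¹ + K` is injective and its inverse
    -- `L_K = (L⁻¹ + K)⁻¹`, defined on `R(L⁻¹ + K)`, is a correct restriction of `L̂` ...
    (∀ K : H →L[ℂ] H,
      (∀ f : H, ∃ h : K f ∈ Lhat.domain, Lhat ⟨K f, h⟩ = 0) →
      Function.Injective (Linv + K) ∧
      ∃ LK : H →ₗ.[ℂ] H,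
        LK.domain = LinearMap.range ((Linv + K : H →L[ℂ] H) : H →ₗ[ℂ] H) ∧
        IsBoundedInverse LK (Linv + K) ∧ IsCorrect LK ∧ LK ≤ Lhat) ∧
    -- ... and conversely every correct restriction `L₁` of `L̂` arises this way:
    -- `K = L₁⁻¹ - L⁻¹` is bounded with `R(K) ⊆ Ker L̂`.
    (∀ (L1 : H →ₗ.[ℂ] H), L1 ≤ Lhat → L1.IsClosed →
      ∀ L1inv : H →L[ℂ] H, IsBoundedInverse L1 L1inv →
      ∀ f : H, ∃ h : (L1inv - Linv) f ∈ Lhat.domain, Lhat ⟨(L1inv - Linv) f, h⟩ = 0) := by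
  obtain ⟨hLdom, hLval⟩ := hLrest
  constructor
  · intro K hK
    set M : H →L[ℂ] H := Linv + K with hMdef
    have hmem : ∀ f : H, M f ∈ Lhat.domain := by
      intro f
      have h1 : Linv f ∈ L.domain := (hLinv.1 f).choose
      have h2 : K f ∈ Lhat.domain := (hK f).choose
      have hMf : M f = Linv f + K f := rfl
      rw [hMf]
      exact add_mem (hLdom h1) h2
    have hval : ∀ f : H, Lhat ⟨M f, hmem f⟩ = f := by
      intro f
      obtain ⟨h1, hv1⟩ := hLinv.1 f
      obtain ⟨h2, hv2⟩ := hK f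
      have heq : (⟨M f, hmem f⟩ : Lhat.domain) = ⟨Linv f, hLdom h1⟩ + ⟨K f, h2⟩ := by
        apply Subtype.ext; rfl
      rw [heq, Lhat.map_add]
      have e1 : Lhat ⟨Linv f, hLdom h1⟩ = L ⟨Linv f, h1⟩ := (hLval rfl).symm
      rw [e1, hv1, hv2, add_zero]
    have hinj : Function.Injective M := by
      intro f g hfg
      have hf := hval f
      rw [show (⟨M f, hmem f⟩ : Lhat.domain) = ⟨M g, hmem g⟩ from Subtype.ext hfg,
        hval g] at hf
      exact hf.symm
    have hinj' : Function.Injective ((M : H →ₗ[ℂ] H)) := hinj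
    set e := LinearEquiv.ofInjective (M : H →ₗ[ℂ] H) hinj' with hedef
    set LK : H →ₗ.[ℂ] H :=
      ⟨LinearMap.range ((M : H →ₗ[ℂ] H)), e.symm.toLinearMap⟩ with hLKdef
    have hLKapp : ∀ u : LK.domain, LK u = e.symm u := fun _ => rfl
    have claimA : ∀ f : H, ∀ h : M f ∈ LK.domain, LK ⟨M f, h⟩ = f := by
      intro f h
      rw [hLKapp]
      apply hinj'
      have h1 : (M : H →ₗ[ℂ] H) ((e.symm ⟨M f, h⟩ : H)) = ((e (e.symm ⟨M f, h⟩) : H)) :=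
        (LinearEquiv.ofInjective_apply _ _).symm
      rw [h1, e.apply_symm_apply]
      rfl
    have claimB : ∀ u : LK.domain, M (LK u) = (u : H) := by
      intro u
      have h1 : (M : H →ₗ[ℂ] H) ((e.symm u : H)) = ((e (e.symm u) : H)) :=
        (LinearEquiv.ofInjective_apply _ _).symm
      rw [hLKapp]
      exact h1.trans (by rw [e.apply_symm_apply])
    have hbdd : IsBoundedInverse LK M := by
      constructor
      · intro f
        exact ⟨LinearMap.mem_range_self _ f, claimA f _⟩
      · exact claimB
    have hgraph : (LK.graph : Set (H × H)) = {p : H × H | p.1 = M p.2} := by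
      ext p
      simp only [SetLike.mem_coe, LinearPMap.mem_graph_iff, Set.mem_setOf_eq]
      constructor
      · rintro ⟨y, h1, h2⟩
        rw [← h1, ← h2]
        exact (claimB y).symm
      · intro hp
        refine ⟨⟨M p.2, LinearMap.mem_range_self _ p.2⟩, hp.symm, claimA p.2 _⟩
    have hclosed : LK.IsClosed := by
      show IsClosed (LK.graph : Set (H × H))
      rw [hgraph]
      exact isClosed_eq continuous_fst (M.continuous.comp continuous_snd)
    have hle : LK ≤ Lhat := by
      constructor
      · rintro x ⟨f, rfl⟩
        exact hmem f
      · rintro ⟨x, f, rfl⟩ y hxy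
        have h1 : LK ⟨(M : H →ₗ[ℂ] H) f, LinearMap.mem_range_self _ f⟩ = f := claimA f _
        have h2 : y = ⟨M f, hmem f⟩ := Subtype.ext hxy.symm
        rw [h2, hval f]
        exact h1
    exact ⟨hinj, LK, rfl, hbdd, ⟨hclosed, M, hbdd⟩, hle⟩
  · intro L1 hL1rest _ L1inv hL1inv f
    obtain ⟨h1, hv1⟩ := hL1inv.1 f
    obtain ⟨h2, hv2⟩ := hLinv.1 f
    have hm1 : L1inv f ∈ Lhat.domain := hL1rest.1 h1
    have hm2 : Linv f ∈ Lhat.domain := hLdom h2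
    have hm : (L1inv - Linv) f ∈ Lhat.domain := by
      have hs : (L1inv - Linv) f = L1inv f - Linv f := rfl
      rw [hs]; exact sub_mem hm1 hm2
    refine ⟨hm, ?_⟩
    have heq : (⟨(L1inv - Linv) f, hm⟩ : Lhat.domain) = ⟨L1inv f, hm1⟩ - ⟨Linv f, hm2⟩ := by
      apply Subtype.ext; rfl
    rw [heq, Lhat.map_sub]
    have e1 : Lhat ⟨L1inv f, hm1⟩ = L1 ⟨L1inv f, h1⟩ := (hL1rest.2 rfl).symm
    have e2 : Lhat ⟨Linv f, hm2⟩ = L ⟨Linv f, h2⟩ := (hLval rfl).symm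
    rw [e1, e2, hv1, hv2, sub_self]
end

section
/- Let L_0 be a minimal linear operator in a Hilbert space H and let L be a correct extension of L_0 (L_0 ⊂ L, with bounded everywhere-defined L^{-1}). For every bounded linear operator K on H satisfying R(L_0) ⊆ Ker K and Ker(L^{-1} + K) = {0}, the inverse L_K = (L^{-1} + K)^{-1}, defined on R(L^{-1} + K), is a correct extension of L_0. Conversely, every correct extension of L_0 is of this form: if L₁ is a correct extension of L_0, then K := L₁^{-1} − L^{-1} is a bounded operator with R(L_0) ⊆ Ker K and Ker(L^{-1} + K) = {0}. -/
open scoped InnerProductSpace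

/-- Auxiliary: an injective linear map has a linear inverse on its range. -/
lemma exists_linear_inverse_on_range {H : Type} [NormedAddCommGroup H]
    [InnerProductSpace ℂ H] (T : H →ₗ[ℂ] H) (hinj : Function.Injective T) :
    ∃ S : LinearMap.range T →ₗ[ℂ] H,
      (∀ f : H, S ⟨T f, ⟨f, rfl⟩⟩ = f) ∧ (∀ u : LinearMap.range T, T (S u) = u) := by
  refine ⟨(LinearEquiv.ofInjective T hinj).symm.toLinearMap, ?_, ?_⟩
  · intro f
    have h : (⟨T f, ⟨f, rfl⟩⟩ : LinearMap.range T) = LinearEquiv.ofInjective T hinj f :=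
      Subtype.ext rfl
    show (LinearEquiv.ofInjective T hinj).symm _ = f
    rw [h, LinearEquiv.symm_apply_apply]
  · intro u
    show T ((LinearEquiv.ofInjective T hinj).symm u) = u
    have h : (LinearEquiv.ofInjective T hinj ((LinearEquiv.ofInjective T hinj).symm u) : H)
        = T ((LinearEquiv.ofInjective T hinj).symm u) := rfl
    rw [← h, LinearEquiv.apply_symm_apply]

/-- Description of all correct extensions of a minimal operator `L_0`
in terms of one fixed correct extension `L`. -/
theorem correct_extensions_description
    {H : Type} [NormedAddCommGroup H] [InnerProductSpace ℂ H] [CompleteSpace H]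
    (L0 : H →ₗ.[ℂ] H) (hmin : IsMinimalOp L0)
    (L : H →ₗ.[ℂ] H) (hLext : L0 ≤ L) (hLclosed : L.IsClosed)
    (Linv : H →L[ℂ] H) (hLinv : IsBoundedInverse L Linv) :
    -- for every bounded `K` with `R(L_0) ⊆ Ker K` and `Ker (L⁻¹ + K) = {0}`, the inverse
    -- `L_K = (L⁻¹ + K)⁻¹`, defined on `R(L⁻¹ + K)`, is a correct extension of `L_0` ...
    (∀ K : H →L[ℂ] H,
      (∀ u : L0.domain, K (L0 u) = 0) →
      (∀ f : H, (Linv + K) f = 0 → f = 0) →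
      ∃ LK : H →ₗ.[ℂ] H,
        LK.domain = LinearMap.range ((Linv + K : H →L[ℂ] H) : H →ₗ[ℂ] H) ∧
        IsBoundedInverse LK (Linv + K) ∧ IsCorrect LK ∧ L0 ≤ LK) ∧
    -- ... and conversely every correct extension `L₁` of `L_0` arises this way:
    -- `K = L₁⁻¹ - L⁻¹` is bounded with `R(L_0) ⊆ Ker K` and `Ker (L⁻¹ + K) = {0}`.
    (∀ (L1 : H →ₗ.[ℂ] H), L0 ≤ L1 → L1.IsClosed →
      ∀ L1inv : H →L[ℂ] H, IsBoundedInverse L1 L1inv →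
      (∀ u : L0.domain, (L1inv - Linv) (L0 u) = 0) ∧
      (∀ f : H, (Linv + (L1inv - Linv)) f = 0 → f = 0)) := by
  constructor
  · intro K hK1 hK2
    have hinj : Function.Injective ((Linv + K : H →L[ℂ] H) : H →ₗ[ℂ] H) := by
      intro a b hab
      have h0 : (Linv + K) (a - b) = 0 := by
        rw [map_sub]
        exact sub_eq_zero.mpr hab
      exact sub_eq_zero.mp (hK2 (a - b) h0)
    set T : H →ₗ[ℂ] H := ((Linv + K : H →L[ℂ] H) : H →ₗ[ℂ] H) with hT
    obtain ⟨S, hS1, hS2⟩ := exists_linear_inverse_on_range T hinj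
    refine ⟨⟨LinearMap.range T, S⟩, rfl, ⟨?_, ?_⟩, ⟨?_, ?_⟩, ?_, ?_⟩
    · intro f
      exact ⟨⟨f, rfl⟩, hS1 f⟩
    · intro u
      exact hS2 u
    · -- closedness of the graph
      have hset : (↑(LinearPMap.graph ⟨LinearMap.range T, S⟩) : Set (H × H))
          = {p : H × H | p.1 - (Linv + K) p.2 = 0} := by
        ext p
        rw [Set.mem_setOf_eq, SetLike.mem_coe, LinearPMap.mem_graph_iff]
        constructor
        · rintro ⟨⟨v, hv⟩, h⟩
          have hTv : T (S ⟨v, hv⟩) = v := hS2 ⟨v, hv⟩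
          rw [← h.1, ← h.2]
          show v - (Linv + K) (S ⟨v, hv⟩) = 0
          have : (Linv + K) (S ⟨v, hv⟩) = v := hTv
          rw [this, sub_self]
        · intro h
          have hp : p.1 = T p.2 := sub_eq_zero.mp h
          refine ⟨⟨p.1, ⟨p.2, hp.symm⟩⟩, rfl, ?_⟩
          show S ⟨p.1, _⟩ = p.2
          have hq : (⟨p.1, ⟨p.2, hp.symm⟩⟩ : LinearMap.range T)
              = ⟨T p.2, ⟨p.2, rfl⟩⟩ := Subtype.ext hp
          rw [hq, hS1]
      show IsClosed _
      rw [hset]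
      have hc : Continuous fun p : H × H => p.1 - (Linv + K) p.2 :=
        continuous_fst.sub ((Linv + K).continuous.comp continuous_snd)
      exact isClosed_eq hc continuous_const
    · exact ⟨Linv + K, ⟨fun f => ⟨⟨f, rfl⟩, hS1 f⟩, fun u => hS2 u⟩⟩
    · -- domain inclusion
      intro x hx
      refine ⟨L0 ⟨x, hx⟩, ?_⟩
      have huL : (x : H) ∈ L.domain := hLext.1 hx
      have e2 : L0 ⟨x, hx⟩ = L ⟨x, huL⟩ := hLext.2 rfl
      have h2 : Linv (L0 ⟨x, hx⟩) = x := by rw [e2]; exact hLinv.2 ⟨x, huL⟩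
      have h3 : K (L0 ⟨x, hx⟩) = 0 := hK1 ⟨x, hx⟩
      show (Linv + K) (L0 ⟨x, hx⟩) = x
      rw [ContinuousLinearMap.add_apply, h2, h3, add_zero]
    · -- agreement on the common domain
      intro x y hxy
      apply hinj
      have huL : (x : H) ∈ L.domain := hLext.1 x.2
      have e2 : L0 x = L ⟨x, huL⟩ := hLext.2 rfl
      have h2 : Linv (L0 x) = x := by rw [e2]; exact hLinv.2 ⟨x, huL⟩
      have h3 : K (L0 x) = 0 := hK1 x
      have hx' : T (L0 x) = (x : H) := by
        show (Linv + K) (L0 x) = x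
        rw [ContinuousLinearMap.add_apply, h2, h3, add_zero]
      have hy' : T (S y) = (y : H) := hS2 y
      show T (L0 x) = T (S y)
      rw [hx', hy', hxy]
  · intro L1 hL1ext hL1closed L1inv hL1inv
    constructor
    · intro u
      have hu1 : (u : H) ∈ L1.domain := hL1ext.1 u.2
      have huL : (u : H) ∈ L.domain := hLext.1 u.2
      have e1 : L0 u = L1 ⟨u, hu1⟩ := hL1ext.2 rfl
      have e2 : L0 u = L ⟨u, huL⟩ := hLext.2 rfl
      have h1 : L1inv (L0 u) = u := by rw [e1]; exact hL1inv.2 ⟨u, hu1⟩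
      have h2 : Linv (L0 u) = u := by rw [e2]; exact hLinv.2 ⟨u, huL⟩
      simp [ContinuousLinearMap.sub_apply, h1, h2]
    · intro f hf
      have hf' : L1inv f = 0 := by simpa using hf
      obtain ⟨hmem, heq⟩ := hL1inv.1 f
      have : (⟨L1inv f, hmem⟩ : L1.domain) = 0 := by
        apply Subtype.ext; simp [hf']
      rw [this] at heq
      rw [← heq, LinearPMap.map_zero]
end

section
/- Let L_0 be a minimal operator and L̂ a maximal operator in a Hilbert space H with L_0 ⊂ L̂, and let L be a boundary correct extension of L_0 (L_0 ⊂ L ⊂ L̂). For every bounded linear operator K on H satisfying R(L_0) ⊆ Ker K and R(K) ⊆ Ker L̂, the operator L^{-1} + K is injective and L_K = (L^{-1} + K)^{-1} is a boundary correct extension of L_0 (L_0 ⊂ L_K ⊂ L̂). Conversely, every boundary correct extension L₁ of L_0 is of this form: K := L₁^{-1} − L^{-1} is bounded with R(L_0) ⊆ Ker K and R(K) ⊆ Ker L̂. -/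
open scoped InnerProductSpace

/-- If `T ≤ S` then `S` agrees with `T` on `T`'s domain. -/
lemma val_of_le {H : Type} [NormedAddCommGroup H] [InnerProductSpace ℂ H]
    {T S : H →ₗ.[ℂ] H} (h : T ≤ S) (x : T.domain) (hx : (x : H) ∈ S.domain) :
    S ⟨(x : H), hx⟩ = T x :=
  (h.2 (x := x) (y := ⟨(x : H), hx⟩) rfl).symm

/-- If `Tinv` inverts `T` and `T ≤ S`, then `S (Tinv f) = f`. -/
lemma inv_val_of_le {H : Type} [NormedAddCommGroup H] [InnerProductSpace ℂ H]
    {T S : H →ₗ.[ℂ] H} (h : T ≤ S) {Tinv : H →L[ℂ] H} (hT : IsBoundedInverse T Tinv)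
    (f : H) (hf : Tinv f ∈ S.domain) : S ⟨Tinv f, hf⟩ = f := by
  obtain ⟨hf', hval⟩ := hT.1 f
  rw [val_of_le h ⟨Tinv f, hf'⟩ hf, hval]

/-- If `Tinv` inverts `T` and `T₀ ≤ T`, then `Tinv (T₀ u) = u`. -/
lemma inv_apply_of_le {H : Type} [NormedAddCommGroup H] [InnerProductSpace ℂ H]
    {T0 T : H →ₗ.[ℂ] H} (h : T0 ≤ T) {Tinv : H →L[ℂ] H} (hT : IsBoundedInverse T Tinv)
    (u : T0.domain) : Tinv (T0 u) = (u : H) := by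
  have h1 : T0 u = T (Submodule.inclusion h.1 u) := LinearPMap.apply_comp_inclusion h u
  rw [h1, hT.2]
  rfl

/-- Description of all boundary correct extensions of a minimal operator
`L_0` with respect to a maximal operator `L̂`, in terms of one fixed boundary correct
extension `L`. -/
theorem boundary_correct_extensions_description
    {H : Type} [NormedAddCommGroup H] [InnerProductSpace ℂ H] [CompleteSpace H]
    (L0 Lhat : H →ₗ.[ℂ] H) (hmin : IsMinimalOp L0) (hmax : IsMaximalOp Lhat)
    (h0hat : L0 ≤ Lhat)
    (L : H →ₗ.[ℂ] H) (hLext : L0 ≤ L) (hLrest : L ≤ Lhat) (hLclosed : L.IsClosed)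
    (Linv : H →L[ℂ] H) (hLinv : IsBoundedInverse L Linv) :
    -- for every bounded `K` with `R(L_0) ⊆ Ker K` and `R(K) ⊆ Ker L̂`, the operator
    -- `L⁻¹ + K` is injective and `L_K = (L⁻¹ + K)⁻¹` is a boundary correct extension ...
    (∀ K : H →L[ℂ] H,
      (∀ u : L0.domain, K (L0 u) = 0) →
      (∀ f : H, ∃ h : K f ∈ Lhat.domain, Lhat ⟨K f, h⟩ = 0) →
      Function.Injective (Linv + K) ∧
      ∃ LK : H →ₗ.[ℂ] H,
        LK.domain = LinearMap.range ((Linv + K : H →L[ℂ] H) : H →ₗ[ℂ] H) ∧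
        IsBoundedInverse LK (Linv + K) ∧ IsCorrect LK ∧ L0 ≤ LK ∧ LK ≤ Lhat) ∧
    -- ... and conversely every boundary correct extension `L₁` of `L_0` arises this way:
    -- `K = L₁⁻¹ - L⁻¹` is bounded with `R(L_0) ⊆ Ker K` and `R(K) ⊆ Ker L̂`.
    (∀ (L1 : H →ₗ.[ℂ] H), L0 ≤ L1 → L1 ≤ Lhat → L1.IsClosed →
      ∀ L1inv : H →L[ℂ] H, IsBoundedInverse L1 L1inv →
      (∀ u : L0.domain, (L1inv - Linv) (L0 u) = 0) ∧
      (∀ f : H, ∃ h : (L1inv - Linv) f ∈ Lhat.domain, Lhat ⟨(L1inv - Linv) f, h⟩ = 0)) := by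
  constructor
  · intro K hK1 hK2
    set A' : H →ₗ[ℂ] H := ((Linv + K : H →L[ℂ] H) : H →ₗ[ℂ] H) with hA'
    have hmemL : ∀ f : H, Linv f ∈ Lhat.domain := fun f => hLrest.1 (hLinv.1 f).1
    have hmemA : ∀ f : H, A' f ∈ Lhat.domain := by
      intro f
      have : A' f = Linv f + K f := rfl
      rw [this]
      exact Lhat.domain.add_mem (hmemL f) (hK2 f).1
    -- key computation : Lhat (A' f) = f
    have hvalA : ∀ f : H, Lhat ⟨A' f, hmemA f⟩ = f := by
      intro f
      have heq : (⟨A' f, hmemA f⟩ : Lhat.domain)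
          = ⟨Linv f, hmemL f⟩ + ⟨K f, (hK2 f).1⟩ := Subtype.ext rfl
      rw [heq, Lhat.map_add, inv_val_of_le hLrest hLinv f (hmemL f), (hK2 f).2, add_zero]
    have hinj : Function.Injective (Linv + K) := by
      intro f g hfg
      have heq : (⟨A' f, hmemA f⟩ : Lhat.domain) = ⟨A' g, hmemA g⟩ := Subtype.ext hfg
      have := hvalA f
      rw [heq, hvalA g] at this
      exact this.symm
    refine ⟨hinj, ?_⟩
    have hle : LinearMap.range A' ≤ Lhat.domain := by
      rintro x ⟨f, rfl⟩
      exact hmemA f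
    refine ⟨⟨LinearMap.range A', Lhat.toFun.comp (Submodule.inclusion hle)⟩, rfl, ?_, ?_, ?_, ?_⟩
    · -- IsBoundedInverse LK (Linv + K)
      constructor
      · intro f
        exact ⟨⟨f, rfl⟩, hvalA f⟩
      · rintro ⟨x, hx⟩
        obtain ⟨f, rfl⟩ := hx
        show (Linv + K) (Lhat ⟨A' f, hmemA f⟩) = A' f
        rw [hvalA f]
        rfl
    · -- IsCorrect
      constructor
      · show IsClosed (_ : Set (H × H))
        have hgraph : ((LinearPMap.mk (LinearMap.range A')
            (Lhat.toFun.comp (Submodule.inclusion hle))).graph : Set (H × H))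
            = {p : H × H | p.1 = (Linv + K) p.2} := by
          ext p
          simp only [SetLike.mem_coe, LinearPMap.mem_graph_iff, Set.mem_setOf_eq]
          constructor
          · rintro ⟨⟨x, hx⟩, h1, h2⟩
            obtain ⟨f, rfl⟩ := hx
            have : Lhat ⟨A' f, hmemA f⟩ = p.2 := h2
            rw [hvalA f] at this
            rw [← h1, ← this]
            rfl
          · intro h
            refine ⟨⟨A' p.2, ⟨p.2, rfl⟩⟩, h.symm, ?_⟩
            exact hvalA p.2
        rw [hgraph]
        exact isClosed_eq continuous_fst ((Linv + K).continuous.comp continuous_snd)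
      · exact ⟨Linv + K, ⟨fun f => ⟨⟨f, rfl⟩, hvalA f⟩, by
          rintro ⟨x, hx⟩
          obtain ⟨f, rfl⟩ := hx
          show (Linv + K) (Lhat ⟨A' f, hmemA f⟩) = A' f
          rw [hvalA f]
          rfl⟩⟩
    · -- L0 ≤ LK
      have hA0 : ∀ u : L0.domain, A' (L0 u) = (u : H) := by
        intro u
        show Linv (L0 u) + K (L0 u) = (u : H)
        rw [hK1 u, add_zero, inv_apply_of_le hLext hLinv u]
      refine ⟨fun x hx => ⟨L0 ⟨x, hx⟩, hA0 ⟨x, hx⟩⟩, ?_⟩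
      intro x y hxy
      show L0 x = Lhat (Submodule.inclusion hle y)
      exact h0hat.2 (x := x) (y := Submodule.inclusion hle y) hxy
    · -- LK ≤ Lhat
      refine ⟨hle, ?_⟩
      intro x y hxy
      show Lhat (Submodule.inclusion hle x) = Lhat y
      congr 1
      exact Subtype.ext hxy
  · intro L1 h01 h1hat h1closed L1inv hInv
    constructor
    · intro u
      have h1 : L1inv (L0 u) = (u : H) := inv_apply_of_le h01 hInv u
      have h2 : Linv (L0 u) = (u : H) := inv_apply_of_le hLext hLinv u
      show L1inv (L0 u) - Linv (L0 u) = 0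
      rw [h1, h2, sub_self]
    · intro f
      have hm1 : L1inv f ∈ Lhat.domain := h1hat.1 (hInv.1 f).1
      have hm2 : Linv f ∈ Lhat.domain := hLrest.1 (hLinv.1 f).1
      have hm : (L1inv - Linv) f ∈ Lhat.domain := by
        have : (L1inv - Linv) f = L1inv f - Linv f := rfl
        rw [this]
        exact Lhat.domain.sub_mem hm1 hm2
      refine ⟨hm, ?_⟩
      have heq : (⟨(L1inv - Linv) f, hm⟩ : Lhat.domain)
          = ⟨L1inv f, hm1⟩ - ⟨Linv f, hm2⟩ := Subtype.ext rfl
      rw [heq, Lhat.map_sub, inv_val_of_le h1hat hInv f hm1,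
        inv_val_of_le hLrest hLinv f hm2, sub_self]
end

section
/- Let L_0 be a densely defined minimal operator in a Hilbert space H with associated maximal operators L̂ = M_0* and M̂ = L_0*, let L_S be a boundary correct extension of L_0 with D(L_S) = D(L_S*), and let L be a boundary correct extension of L_0 with K = L^{-1} − L_S^{-1}. If D(L) = D(L*), then R(K*) ⊆ D(L̂) and R(K) ⊆ D(M̂); in particular R(K) ∪ R(K*) ⊆ D(L̂) ∩ D(M̂). -/
open scoped InnerProductSpace

/-- If `T ≤ S` and `S` is densely defined, then `S†.domain ⊆ T†.domain`. -/
lemma adjoint_domain_mono {H : Type} [NormedAddCommGroup H] [InnerProductSpace ℂ H]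
    [CompleteSpace H] {T S : H →ₗ.[ℂ] H} (hTS : T ≤ S) (hS : Dense (S.domain : Set H))
    {v : H} (hv : v ∈ S.adjoint.domain) : v ∈ T.adjoint.domain := by
  refine LinearPMap.mem_adjoint_domain_of_exists _ ⟨S.adjoint ⟨v, hv⟩, fun x => ?_⟩
  have h1 := LinearPMap.adjoint_isFormalAdjoint hS ⟨v, hv⟩ ⟨(x : H), hTS.1 x.2⟩
  have h2 : T x = S ⟨(x : H), hTS.1 x.2⟩ := hTS.2 rfl
  rw [h2]
  exact h1

/-- If `Tinv` is a bounded inverse of `T`, then `Tinv† f ∈ T†.domain` for all `f`. -/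
lemma adjoint_inv_mem_adjoint_domain {H : Type} [NormedAddCommGroup H]
    [InnerProductSpace ℂ H] [CompleteSpace H] {T : H →ₗ.[ℂ] H} {Tinv : H →L[ℂ] H}
    (h : IsBoundedInverse T Tinv) (f : H) :
    ContinuousLinearMap.adjoint Tinv f ∈ T.adjoint.domain := by
  refine LinearPMap.mem_adjoint_domain_of_exists _ ⟨f, fun x => ?_⟩
  rw [ContinuousLinearMap.adjoint_inner_left, h.2 x]

/-- If `L_S` is a boundary correct extension of `L_0` with
`D(L_S) = D(L_S*)`, `L` is a boundary correct extension with `K = L⁻¹ - L_S⁻¹`, and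
`D(L) = D(L*)`, then `R(K*) ⊆ D(L̂)` and `R(K) ⊆ D(M̂)`; in particular
`R(K) ∪ R(K*) ⊆ D(L̂) ∩ D(M̂)`. -/
theorem range_K_in_domains
    {H : Type} [NormedAddCommGroup H] [InnerProductSpace ℂ H] [CompleteSpace H]
    (L0 M0 : H →ₗ.[ℂ] H)
    (hL0min : IsMinimalOp L0) (hM0min : IsMinimalOp M0)
    (hL0dense : Dense (L0.domain : Set H)) (hM0dense : Dense (M0.domain : Set H))
    (hdom : M0.domain = L0.domain)
    (hform : ∀ (u : L0.domain) (v : M0.domain), ⟪L0 u, (v : H)⟫_ℂ = ⟪(u : H), M0 v⟫_ℂ)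
    -- the boundary correct extension `L_S` with `D(L_S) = D(L_S*)`
    (LS : H →ₗ.[ℂ] H) (hLSext : L0 ≤ LS) (hLShat : LS ≤ M0.adjoint) (hLSclosed : LS.IsClosed)
    (LSinv : H →L[ℂ] H) (hLSinv : IsBoundedInverse LS LSinv)
    (hLSdomeq : LS.adjoint.domain = LS.domain)
    -- the boundary correct extension `L`, with `K = L⁻¹ - L_S⁻¹`
    (L : H →ₗ.[ℂ] H) (hLext : L0 ≤ L) (hLhat : L ≤ M0.adjoint) (hLclosed : L.IsClosed)
    (Linv : H →L[ℂ] H) (hLinv : IsBoundedInverse L Linv)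
    (K Kadj : H →L[ℂ] H) (hK : K = Linv - LSinv) (hKadj : Kadj = ContinuousLinearMap.adjoint K)
    -- `D(L) = D(L*)`
    (hLdomeq : L.adjoint.domain = L.domain) :
    (∀ f : H, Kadj f ∈ M0.adjoint.domain) ∧
    (∀ f : H, K f ∈ L0.adjoint.domain) ∧
    -- in particular `R(K) ∪ R(K*) ⊆ D(L̂) ∩ D(M̂)`
    (∀ f : H, (K f ∈ M0.adjoint.domain ∧ K f ∈ L0.adjoint.domain) ∧
      (Kadj f ∈ M0.adjoint.domain ∧ Kadj f ∈ L0.adjoint.domain)) := by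
  have hLdense : Dense (L.domain : Set H) := hL0dense.mono hLext.1
  have hLSdense : Dense (LS.domain : Set H) := hL0dense.mono hLSext.1
  -- K f = Linv f - LSinv f
  have hKapp : ∀ f : H, K f = Linv f - LSinv f := fun f => by
    rw [hK]; rfl
  -- Kadj f = Linv† f - LSinv† f
  have hKadjapp : ∀ f : H,
      Kadj f = ContinuousLinearMap.adjoint Linv f - ContinuousLinearMap.adjoint LSinv f := by
    intro f
    rw [hKadj, hK, map_sub]
    rfl
  -- Linv f ∈ D(L), LSinv f ∈ D(LS)
  have hLinvmem : ∀ f : H, Linv f ∈ L.domain := fun f => (hLinv.1 f).1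
  have hLSinvmem : ∀ f : H, LSinv f ∈ LS.domain := fun f => (hLSinv.1 f).1
  -- R(K) ⊆ D(M̂)
  have hKMhat : ∀ f : H, K f ∈ M0.adjoint.domain := by
    intro f
    rw [hKapp f]
    exact Submodule.sub_mem _ (hLhat.1 (hLinvmem f)) (hLShat.1 (hLSinvmem f))
  -- R(K) ⊆ D(L0*)
  have hKL0 : ∀ f : H, K f ∈ L0.adjoint.domain := by
    intro f
    rw [hKapp f]
    refine Submodule.sub_mem _ ?_ ?_
    · exact adjoint_domain_mono hLext hLdense (hLdomeq ▸ hLinvmem f)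
    · exact adjoint_domain_mono hLSext hLSdense (hLSdomeq ▸ hLSinvmem f)
  -- Linv† f ∈ D(L*), LSinv† f ∈ D(LS*)
  have hLadjmem : ∀ f : H, ContinuousLinearMap.adjoint Linv f ∈ L.adjoint.domain :=
    fun f => adjoint_inv_mem_adjoint_domain hLinv f
  have hLSadjmem : ∀ f : H, ContinuousLinearMap.adjoint LSinv f ∈ LS.adjoint.domain :=
    fun f => adjoint_inv_mem_adjoint_domain hLSinv f
  -- R(K*) ⊆ D(L̂)
  have hKadjLhat : ∀ f : H, Kadj f ∈ M0.adjoint.domain := by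
    intro f
    rw [hKadjapp f]
    refine Submodule.sub_mem _ ?_ ?_
    · exact hLhat.1 (hLdomeq ▸ hLadjmem f)
    · exact hLShat.1 (hLSdomeq ▸ hLSadjmem f)
  -- R(K*) ⊆ D(L0*)
  have hKadjL0 : ∀ f : H, Kadj f ∈ L0.adjoint.domain := by
    intro f
    rw [hKadjapp f]
    refine Submodule.sub_mem _ ?_ ?_
    · exact adjoint_domain_mono hLext hLdense (hLadjmem f)
    · exact adjoint_domain_mono hLSext hLSdense (hLSadjmem f)
  exact ⟨hKadjLhat, hKL0, fun f => ⟨⟨hKMhat f, hKL0 f⟩, ⟨hKadjLhat f, hKadjL0 f⟩⟩⟩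
end

section
/- Define the bounded linear operator T on the Hilbert space L²(0,1) by (Tf)(x) = ∫₀ˣ (1 − e^{t−x}) f(t) dt − (1/2)∫₀¹ f(t) dt + (e^{1−x}/(1+e)) ∫₀¹ e^{t−1} f(t) dt. Then T is a normal operator: T T* = T* T. -/
/-!
`T` inverts `y ↦ y'' + y'` under the antiperiodic boundary conditions `y(0) + y(1) = 0`,
`y'(0) + y'(1) = 0`, so `e^{λ x}` is an eigenfunction of `T` with eigenvalue `1 / (λ² + λ)`
whenever `e^λ = -1`, i.e. for `λ = (2k+1)πi`, `k ∈ ℤ`. These exponentials are `e^{iπx}` times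
the Fourier basis, so by Parseval they form a complete orthogonal family in `L²(0,1)`; an operator
that is diagonal in a complete orthogonal family commutes with its adjoint.
-/

open MeasureTheory Set Complex
open ComplexConjugate

namespace ContinuousLinearMap

variable {𝕜 E ι : Type*} [RCLike 𝕜] [NormedAddCommGroup E] [InnerProductSpace 𝕜 E]
  [CompleteSpace E] {T : E →L[𝕜] E} {v : ι → E} {μ : ι → 𝕜}

local notation "⟪" x ", " y "⟫" => @inner 𝕜 _ _ x y

theorem adjoint_apply_of_orthogonal_eigenvectors (hv : Pairwise fun i j ↦ ⟪v i, v j⟫ = 0)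
    (htot : ∀ x, (∀ i, ⟪v i, x⟫ = 0) → x = 0) (hT : ∀ i, T (v i) = μ i • v i) (i : ι) :
    adjoint T (v i) = conj (μ i) • v i := by
  refine sub_eq_zero.1 (htot _ fun j ↦ ?_)
  rw [inner_sub_right, adjoint_inner_right, hT, inner_smul_left, inner_smul_right]
  rcases eq_or_ne j i with rfl | hji
  · ring
  · rw [hv hji]; ring

theorem isStarNormal_of_orthogonal_eigenvectors (hv : Pairwise fun i j ↦ ⟪v i, v j⟫ = 0)
    (htot : ∀ x, (∀ i, ⟪v i, x⟫ = 0) → x = 0) (hT : ∀ i, T (v i) = μ i • v i) :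
    IsStarNormal T := by
  have inner_apply (i : ι) (x : E) : ⟪v i, T x⟫ = μ i * ⟪v i, x⟫ := by
    rw [← adjoint_inner_left, adjoint_apply_of_orthogonal_eigenvectors hv htot hT,
      inner_smul_left, RCLike.conj_conj]
  have inner_adjoint_apply (i : ι) (x : E) : ⟪v i, adjoint T x⟫ = conj (μ i) * ⟪v i, x⟫ := by
    rw [adjoint_inner_right, hT, inner_smul_left]
  refine ⟨ext fun x ↦ sub_eq_zero.1 (htot _ fun i ↦ ?_)⟩
  rw [inner_sub_right, star_eq_adjoint, mul_apply_eq_comp, mul_apply_eq_comp,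
    inner_adjoint_apply, inner_apply, inner_apply, inner_adjoint_apply, sub_eq_zero, mul_left_comm]

end ContinuousLinearMap

theorem ae_eq_zero_of_fourierCoeffOn_eq_zero {a b : ℝ} (hab : a < b) {f : ℝ → ℂ}
    (hf : MemLp f 2 (volume.restrict (Ioc a b))) (h : ∀ n, fourierCoeffOn hab f n = 0) :
    f =ᵐ[volume.restrict (Ioc a b)] 0 := by
  have hsum := hasSum_sq_fourierCoeffOn hab hf
  simp only [h, norm_zero, zero_pow two_ne_zero] at hsum
  have hint : ∫ x in a..b, ‖f x‖ ^ 2 = 0 := by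
    have := hasSum_zero.unique hsum
    simpa [sub_ne_zero.2 hab.ne', eq_comm] using this
  rw [intervalIntegral.integral_of_le hab.le, integral_eq_zero_iff_of_nonneg
    (fun _ ↦ by positivity) (hf.integrable_norm_pow two_ne_zero)] at hint
  filter_upwards [hint] with x hx
  simpa using hx

theorem integral_Ioo_exp_mul_complex {c : ℂ} (hc : c ≠ 0) {a b : ℝ} (hab : a ≤ b) :
    ∫ t in Ioo a b, exp (c * t) = (exp (c * b) - exp (c * a)) / c := by
  rw [← integral_Ioc_eq_integral_Ioo, ← intervalIntegral.integral_of_le hab,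
    integral_exp_mul_complex hc]

theorem integrableOn_Ioo_exp_mul_complex (c : ℂ) (a b : ℝ) :
    IntegrableOn (fun t : ℝ ↦ exp (c * t)) (Ioo a b) :=
  (Continuous.integrableOn_Icc (by fun_prop)).mono_set Ioo_subset_Icc_self

local notation "μ₀₁" => volume.restrict (Ioo (0:ℝ) 1)

noncomputable def antiperiodicGreen (f : ℝ → ℂ) (x : ℝ) : ℂ :=
  (∫ t in Ioo (0:ℝ) x, (1 - exp ((t : ℂ) - (x : ℂ))) * f t) -
    (1 / 2 : ℂ) * (∫ t in Ioo (0:ℝ) 1, f t) +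
    (exp (1 - (x : ℂ)) / (1 + exp 1)) * (∫ t in Ioo (0:ℝ) 1, exp ((t : ℂ) - 1) * f t)

theorem antiperiodicGreen_congr_ae {f g : ℝ → ℂ} (hfg : f =ᵐ[μ₀₁] g) {x : ℝ} (hx : x ≤ 1) :
    antiperiodicGreen f x = antiperiodicGreen g x := by
  have hfg' : f =ᵐ[volume.restrict (Ioo 0 x)] g :=
    ae_restrict_of_ae_restrict_of_subset (Ioo_subset_Ioo_right hx) hfg
  have hmul (s : Set ℝ) (h : ℝ → ℂ) (hs : f =ᵐ[volume.restrict s] g) :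
      ∫ t in s, h t * f t = ∫ t in s, h t * g t :=
    integral_congr_ae (by filter_upwards [hs] with t ht; rw [ht])
  rw [antiperiodicGreen, antiperiodicGreen, hmul _ _ hfg', hmul _ _ hfg, integral_congr_ae hfg]

theorem antiperiodicGreen_exp {c : ℂ} (hc : exp c = -1) {x : ℝ} (hx : 0 ≤ x) :
    antiperiodicGreen (fun t : ℝ ↦ exp (c * t)) x = (c ^ 2 + c)⁻¹ * exp (c * x) := by
  have hc0 : c ≠ 0 := by
    rintro rfl
    norm_num at hc
  have hc1 : 1 + c ≠ 0 := by
    intro h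
    obtain rfl : c = -1 := eq_neg_of_add_eq_zero_right h
    have : Real.exp (-1) = -1 := by
      rw [← ofReal_one, ← ofReal_neg, ← ofReal_exp] at hc
      exact_mod_cast hc
    linarith [Real.exp_pos (-1)]
  have he1 : 1 + exp 1 ≠ 0 := by
    rw [← ofReal_one, ← ofReal_exp, ← ofReal_add]
    exact_mod_cast (by positivity : 0 < 1 + Real.exp 1).ne'
  have hshift (s : ℝ) (y : ℂ) :
      exp ((s : ℂ) - y) * exp (c * s) = exp (-y) * exp ((1 + c) * s) := by
    rw [← exp_add, ← exp_add]; ring_nf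
  have hvolterra : ∫ t in Ioo (0:ℝ) x, (1 - exp ((t : ℂ) - x)) * exp (c * t) =
      (exp (c * x) - 1) / c - exp (-(x : ℂ)) * ((exp ((1 + c) * x) - 1) / (1 + c)) := by
    simp_rw [sub_mul, one_mul, hshift]
    rw [integral_sub (integrableOn_Ioo_exp_mul_complex _ _ _)
        ((integrableOn_Ioo_exp_mul_complex _ _ _).const_mul _),
      integral_const_mul, integral_Ioo_exp_mul_complex hc0 hx, integral_Ioo_exp_mul_complex hc1 hx]
    simp
  have hmean : ∫ t in Ioo (0:ℝ) 1, exp (c * t) = (exp c - 1) / c := by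
    rw [integral_Ioo_exp_mul_complex hc0 zero_le_one]; simp
  have hweighted : ∫ t in Ioo (0:ℝ) 1, exp ((t : ℂ) - 1) * exp (c * t) =
      exp (-1) * ((exp (1 + c) - 1) / (1 + c)) := by
    simp_rw [hshift]
    rw [integral_const_mul, integral_Ioo_exp_mul_complex hc1 zero_le_one]; simp
  rw [antiperiodicGreen, hvolterra, hmean, hweighted, exp_add, hc, add_mul, one_mul, exp_add,
    exp_neg, exp_neg, exp_sub, show c ^ 2 + c = c * (1 + c) by ring]
  field_simp
  ring

local notation "⟪" x ", " y "⟫" => @inner ℂ _ _ x y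

noncomputable def antiperiodicFreq (k : ℤ) : ℂ := (2 * k + 1) * Real.pi * I

theorem antiperiodicFreq_sub (j k : ℤ) :
    antiperiodicFreq k - antiperiodicFreq j = (k - j : ℤ) * (2 * Real.pi * I) := by
  unfold antiperiodicFreq; push_cast; ring

theorem exp_antiperiodicFreq (k : ℤ) : exp (antiperiodicFreq k) = -1 := by
  rw [← sub_add_cancel (antiperiodicFreq k) (antiperiodicFreq 0), antiperiodicFreq_sub, exp_add,
    exp_int_mul_two_pi_mul_I, one_mul, antiperiodicFreq]
  simp [exp_pi_mul_I]

theorem conj_antiperiodicFreq (k : ℤ) : conj (antiperiodicFreq k) = -antiperiodicFreq k := by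
  simp [antiperiodicFreq, map_ofNat]

theorem memLp_exp_antiperiodicFreq (k : ℤ) :
    MemLp (fun x : ℝ ↦ exp (antiperiodicFreq k * x)) 2 μ₀₁ := by
  refine MemLp.of_bound (by fun_prop) 1 (ae_of_all _ fun x ↦ ?_)
  simp [norm_exp, antiperiodicFreq]

noncomputable def antiperiodicExp (k : ℤ) : Lp ℂ 2 μ₀₁ :=
  (memLp_exp_antiperiodicFreq k).toLp _

theorem coeFn_antiperiodicExp (k : ℤ) :
    antiperiodicExp k =ᵐ[μ₀₁] fun x : ℝ ↦ exp (antiperiodicFreq k * x) :=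
  MemLp.coeFn_toLp _

theorem inner_antiperiodicExp (k : ℤ) (g : Lp ℂ 2 μ₀₁) :
    ⟪antiperiodicExp k, g⟫ = ∫ x in Ioo (0:ℝ) 1, exp (-antiperiodicFreq k * x) * g x := by
  rw [L2.inner_def]
  refine integral_congr_ae ?_
  filter_upwards [coeFn_antiperiodicExp k] with x hx
  rw [RCLike.inner_apply, hx, ← exp_conj, map_mul, conj_antiperiodicFreq, conj_ofReal, mul_comm]

theorem inner_antiperiodicExp_antiperiodicExp {j k : ℤ} (hjk : j ≠ k) :
    ⟪antiperiodicExp j, antiperiodicExp k⟫ = 0 := by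
  have hne : antiperiodicFreq k - antiperiodicFreq j ≠ 0 := by
    rw [antiperiodicFreq_sub]
    exact mul_ne_zero (Int.cast_ne_zero.2 (sub_ne_zero.2 hjk.symm)) two_pi_I_ne_zero
  have hcongr : (fun x : ℝ ↦ exp (-antiperiodicFreq j * x) * antiperiodicExp k x)
      =ᵐ[μ₀₁] fun x : ℝ ↦ exp ((antiperiodicFreq k - antiperiodicFreq j) * x) := by
    filter_upwards [coeFn_antiperiodicExp k] with x hx
    rw [hx, ← exp_add]
    ring_nf
  rw [inner_antiperiodicExp, integral_congr_ae hcongr, integral_Ioo_exp_mul_complex hne zero_le_one]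
  rw [ofReal_one, mul_one, antiperiodicFreq_sub, exp_int_mul_two_pi_mul_I]
  simp

theorem inner_antiperiodicExp_eq_fourierCoeffOn (k : ℤ) (g : Lp ℂ 2 μ₀₁) :
    ⟪antiperiodicExp k, g⟫ =
      fourierCoeffOn zero_lt_one (fun x : ℝ ↦ exp (-(Real.pi * I * x)) * g x) k := by
  rw [inner_antiperiodicExp, fourierCoeffOn_eq_integral,
    intervalIntegral.integral_of_le zero_le_one, integral_Ioc_eq_integral_Ioo]
  simp only [sub_zero, div_one, one_smul, smul_eq_mul, fourier_coe_apply]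
  refine setIntegral_congr_fun measurableSet_Ioo fun x _ ↦ ?_
  rw [← mul_assoc, ← exp_add, antiperiodicFreq]
  push_cast
  ring_nf

theorem eq_zero_of_forall_inner_antiperiodicExp_eq_zero {g : Lp ℂ 2 μ₀₁}
    (h : ∀ k, ⟪antiperiodicExp k, g⟫ = 0) : g = 0 := by
  have hIoo : μ₀₁ = volume.restrict (Ioc 0 1) :=
    Measure.restrict_congr_set (Ioo_ae_eq_Ioc (a := (0:ℝ)) (b := 1))
  set u : ℝ → ℂ := fun x ↦ exp (-(Real.pi * I * x)) * g x
  have hu : MemLp u 2 (volume.restrict (Ioc 0 1)) := by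
    rw [← hIoo]
    refine (Lp.memLp g).of_le (by fun_prop) (ae_of_all _ fun x ↦ ?_)
    simp [u, norm_exp]
  have hu0 := ae_eq_zero_of_fourierCoeffOn_eq_zero zero_lt_one hu
    fun k ↦ (inner_antiperiodicExp_eq_fourierCoeffOn k g).symm.trans (h k)
  rw [← hIoo] at hu0
  refine Lp.eq_zero_iff_ae_eq_zero.2 ?_
  filter_upwards [hu0] with x hx
  simpa [u] using hx

theorem apply_antiperiodicExp {T : Lp ℂ 2 μ₀₁ →L[ℂ] Lp ℂ 2 μ₀₁}
    (hT : ∀ f : Lp ℂ 2 μ₀₁, T f =ᵐ[μ₀₁] antiperiodicGreen f) (k : ℤ) :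
    T (antiperiodicExp k) =
      (antiperiodicFreq k ^ 2 + antiperiodicFreq k)⁻¹ • antiperiodicExp k := by
  set c := antiperiodicFreq k
  refine Lp.ext ?_
  filter_upwards [hT (antiperiodicExp k), Lp.coeFn_smul (c ^ 2 + c)⁻¹ (antiperiodicExp k),
    coeFn_antiperiodicExp k, ae_restrict_mem measurableSet_Ioo] with x hTx hsmul hx hmem
  rw [hTx, hsmul, Pi.smul_apply, hx, smul_eq_mul,
    antiperiodicGreen_congr_ae (coeFn_antiperiodicExp k) hmem.2.le,
    antiperiodicGreen_exp (exp_antiperiodicFreq k) hmem.1.le]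

/-- The bounded operator `T` on `L²(0,1)` given by
`(Tf)(x) = ∫₀ˣ (1 - e^{t-x}) f(t) dt - (1/2)∫₀¹ f(t) dt
  + (e^{1-x}/(1+e)) ∫₀¹ e^{t-1} f(t) dt`
is normal: `T T* = T* T`. -/
theorem integral_operator_is_normal
    (T : Lp ℂ 2 (volume.restrict (Set.Ioo (0:ℝ) 1)) →L[ℂ]
         Lp ℂ 2 (volume.restrict (Set.Ioo (0:ℝ) 1)))
    (hT : ∀ f : Lp ℂ 2 (volume.restrict (Set.Ioo (0:ℝ) 1)),
      ∀ᵐ x ∂(volume.restrict (Set.Ioo (0:ℝ) 1)),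
        (T f : ℝ → ℂ) x =
          (∫ t in Set.Ioo (0:ℝ) x, (1 - Complex.exp ((t : ℂ) - (x : ℂ))) * (f : ℝ → ℂ) t) -
          (1 / 2 : ℂ) * (∫ t in Set.Ioo (0:ℝ) 1, (f : ℝ → ℂ) t) +
          (Complex.exp (1 - (x : ℂ)) / (1 + Complex.exp 1)) *
            (∫ t in Set.Ioo (0:ℝ) 1, Complex.exp ((t : ℂ) - 1) * (f : ℝ → ℂ) t)) :
    T.comp (ContinuousLinearMap.adjoint T) = (ContinuousLinearMap.adjoint T).comp T := by
  have hnormal : IsStarNormal T :=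
    ContinuousLinearMap.isStarNormal_of_orthogonal_eigenvectors
      (fun _ _ ↦ inner_antiperiodicExp_antiperiodicExp)
      (fun _ ↦ eq_zero_of_forall_inner_antiperiodicExp_eq_zero) (apply_antiperiodicExp hT)
  exact hnormal.star_comm_self.eq.symm
end
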